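/- arXiv:1804.02627 — 11 statements merged into one kernel-verified Lean document; each statement's English description precedes it below -/
import Mathlib

section
/- Let ℓ ≥ 2 be an integer and ρ ≥ 1 a real number. Let OPT_1, …, OPT_ℓ and TOP_1, …, TOP_ℓ be nonnegative real numbers such that TOP_i ≤ ρ·(OPT_i + OPT_{i+1} + … + OPT_ℓ) for every 1 ≤ i ≤ ℓ. Then Σ_{i=1}^ℓ i·TOP_i ≤ ((ℓ+1)/2)·ρ·Σ_{i=1}^ℓ i·OPT_i. -/
open Finset

section

variable {K : Type*} [Field K] [LinearOrder K] [IsStrictOrderedRing K]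

theorem sum_Icc_one_natCast (n : ℕ) : ∑ i ∈ Icc 1 n, (i : K) = n * (n + 1) / 2 := by
  induction n with
  | zero => simp
  | succ n ih =>
    rw [sum_Icc_succ_top (by omega), ih]
    push_cast
    ring

/-- Exchanging the order of summation: `f j` occurs in the suffix sums of the levels
`i = 1, …, j`, so it is weighted by `1 + ⋯ + j`. -/
theorem sum_Icc_mul_sum_Icc_suffix (ℓ : ℕ) (f : ℕ → K) :
    ∑ i ∈ Icc 1 ℓ, (i : K) * ∑ j ∈ Icc i ℓ, f j =
      ∑ j ∈ Icc 1 ℓ, (j : K) * (j + 1) / 2 * f j := by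
  calc ∑ i ∈ Icc 1 ℓ, (i : K) * ∑ j ∈ Icc i ℓ, f j
      = ∑ i ∈ Icc 1 ℓ, ∑ j ∈ Icc i ℓ, (i : K) * f j := by simp only [mul_sum]
    _ = ∑ j ∈ Icc 1 ℓ, ∑ i ∈ Icc 1 j, (i : K) * f j :=
        sum_comm' fun i j => by simp only [mem_Icc]; omega
    _ = ∑ j ∈ Icc 1 ℓ, (j : K) * (j + 1) / 2 * f j := by
        simp only [← sum_mul, sum_Icc_one_natCast]

theorem sum_Icc_triangular_mul_le (ℓ : ℕ) (f : ℕ → K) (hf : ∀ j ∈ Icc 1 ℓ, 0 ≤ f j) :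
    ∑ j ∈ Icc 1 ℓ, (j : K) * (j + 1) / 2 * f j ≤
      ((ℓ : K) + 1) / 2 * ∑ j ∈ Icc 1 ℓ, (j : K) * f j := by
  rw [mul_sum]
  refine sum_le_sum fun j hj => ?_
  have hjℓ : (j : K) + 1 ≤ ℓ + 1 := by
    gcongr
    exact_mod_cast (mem_Icc.mp hj).2
  calc (j : K) * (j + 1) / 2 * f j = (j + 1) / 2 * (j * f j) := by ring
    _ ≤ (ℓ + 1) / 2 * (j * f j) := by
        gcongr
        exact mul_nonneg j.cast_nonneg (hf j hj)

end

theorem stmt_0_general (ℓ : ℕ) (ρ : ℝ) (hρ : 1 ≤ ρ)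
    (OPT TOP : ℕ → ℝ)
    (hOPTnn : ∀ i ∈ Finset.Icc 1 ℓ, 0 ≤ OPT i)
    (hle : ∀ i ∈ Finset.Icc 1 ℓ, TOP i ≤ ρ * ∑ j ∈ Finset.Icc i ℓ, OPT j) :
    ∑ i ∈ Finset.Icc 1 ℓ, (i : ℝ) * TOP i ≤
      (((ℓ : ℝ) + 1) / 2) * ρ * ∑ i ∈ Finset.Icc 1 ℓ, (i : ℝ) * OPT i := by
  have hρ₀ : 0 ≤ ρ := zero_le_one.trans hρ
  calc ∑ i ∈ Icc 1 ℓ, (i : ℝ) * TOP i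
      ≤ ∑ i ∈ Icc 1 ℓ, (i : ℝ) * (ρ * ∑ j ∈ Icc i ℓ, OPT j) :=
        sum_le_sum fun i hi => mul_le_mul_of_nonneg_left (hle i hi) i.cast_nonneg
    _ = ρ * ∑ j ∈ Icc 1 ℓ, (j : ℝ) * (j + 1) / 2 * OPT j := by
        simp only [mul_left_comm _ ρ, ← mul_sum, sum_Icc_mul_sum_Icc_suffix]
    _ ≤ ρ * (((ℓ : ℝ) + 1) / 2 * ∑ j ∈ Icc 1 ℓ, (j : ℝ) * OPT j) := by
        gcongr
        exact sum_Icc_triangular_mul_le ℓ OPT hOPTnn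
    _ = ((ℓ : ℝ) + 1) / 2 * ρ * ∑ i ∈ Icc 1 ℓ, (i : ℝ) * OPT i := by ring

/-- Arithmetic core of the `(ℓ+1)/2·ρ` guarantee of the top-down approach for the
multi-level Steiner tree problem: if `TOP i ≤ ρ·(OPT i + … + OPT ℓ)` for all levels `i`,
then `Σ i·TOP i ≤ ((ℓ+1)/2)·ρ·Σ i·OPT i`. -/
theorem stmt_0 (ℓ : ℕ) (hℓ : 2 ≤ ℓ) (ρ : ℝ) (hρ : 1 ≤ ρ)
    (OPT TOP : ℕ → ℝ)
    (hOPTnn : ∀ i ∈ Finset.Icc 1 ℓ, 0 ≤ OPT i)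
    (hTOPnn : ∀ i ∈ Finset.Icc 1 ℓ, 0 ≤ TOP i)
    (hle : ∀ i ∈ Finset.Icc 1 ℓ, TOP i ≤ ρ * ∑ j ∈ Finset.Icc i ℓ, OPT j) :
    ∑ i ∈ Finset.Icc 1 ℓ, (i : ℝ) * TOP i ≤
      (((ℓ : ℝ) + 1) / 2) * ρ * ∑ i ∈ Finset.Icc 1 ℓ, (i : ℝ) * OPT i :=
  stmt_0_general ℓ ρ hρ OPT TOP hOPTnn hle
end

section
/- Let ℓ ≥ 2 be an integer, ρ ≥ 1 a real number, OPT_1, …, OPT_ℓ nonnegative reals, and x, y real numbers satisfying x ≤ ρ·Σ_{i=1}^ℓ (i(i+1)/2)·OPT_i and y ≤ ℓ·ρ·Σ_{i=1}^ℓ OPT_i. Then min(x, y) ≤ ((ℓ+2)/3)·ρ·Σ_{i=1}^ℓ i·OPT_i. -/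
/-!
Bound `min x y` by the convex combination `2/3 · x + 1/3 · y`. Level `i` then carries the weight
`ρ (i(i+1) + ℓ)/3`, which is at most `ρ (ℓ+2) i/3` because `(i - 1)(ℓ - i) ≥ 0` for `1 ≤ i ≤ ℓ`.
-/

open Finset

theorem min_le_convex_combination {a b : ℝ} (x y : ℝ) (ha : 0 ≤ a) (hb : 0 ≤ b)
    (hab : a + b = 1) : min x y ≤ a * x + b * y := by
  calc min x y = a * min x y + b * min x y := by rw [← add_mul, hab, one_mul]
    _ ≤ a * x + b * y := by gcongr <;> simp

theorem mul_add_one_add_le_of_one_le_of_le {i ℓ : ℝ} (h1 : 1 ≤ i) (hiℓ : i ≤ ℓ) :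
    i * (i + 1) + ℓ ≤ (ℓ + 2) * i := by
  nlinarith [mul_nonneg (sub_nonneg.mpr h1) (sub_nonneg.mpr hiℓ)]

theorem stmt_2_general (ℓ : ℕ) (ρ : ℝ) (hρ : 1 ≤ ρ)
    (OPT : ℕ → ℝ) (hOPTnn : ∀ i ∈ Finset.Icc 1 ℓ, 0 ≤ OPT i)
    (x y : ℝ)
    (hx : x ≤ ρ * ∑ i ∈ Finset.Icc 1 ℓ, ((i : ℝ) * ((i : ℝ) + 1) / 2) * OPT i)
    (hy : y ≤ (ℓ : ℝ) * ρ * ∑ i ∈ Finset.Icc 1 ℓ, OPT i) :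
    min x y ≤ (((ℓ : ℝ) + 2) / 3) * ρ * ∑ i ∈ Finset.Icc 1 ℓ, (i : ℝ) * OPT i := by
  have hweights : ∀ i ∈ Icc 1 ℓ, ((i : ℝ) * (i + 1) + ℓ) * OPT i ≤ ((ℓ + 2) * i) * OPT i := by
    intro i hi
    obtain ⟨h1, hiℓ⟩ := mem_Icc.mp hi
    gcongr
    · exact hOPTnn i hi
    · exact mul_add_one_add_le_of_one_le_of_le (by exact_mod_cast h1) (by exact_mod_cast hiℓ)
  calc min x y ≤ 2 / 3 * x + 1 / 3 * y :=
        min_le_convex_combination x y (by norm_num) (by norm_num) (by norm_num)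
    _ ≤ 2 / 3 * (ρ * ∑ i ∈ Icc 1 ℓ, ((i : ℝ) * (i + 1) / 2) * OPT i)
          + 1 / 3 * (ℓ * ρ * ∑ i ∈ Icc 1 ℓ, OPT i) := by gcongr
    _ = ρ / 3 * ∑ i ∈ Icc 1 ℓ, ((i : ℝ) * (i + 1) + ℓ) * OPT i := by
      simp only [mul_sum, ← sum_add_distrib]
      exact sum_congr rfl fun i _ => by ring
    _ ≤ ρ / 3 * ∑ i ∈ Icc 1 ℓ, ((ℓ + 2) * i) * OPT i :=
      mul_le_mul_of_nonneg_left (sum_le_sum hweights) (by linarith)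
    _ = ((ℓ + 2) / 3) * ρ * ∑ i ∈ Icc 1 ℓ, (i : ℝ) * OPT i := by
      simp only [mul_sum]
      exact sum_congr rfl fun i _ => by ring

/-- Arithmetic core of the `(ℓ+2)/3·ρ` guarantee for the better of the top-down
solution (cost `x`) and bottom-up solution (cost `y`) for the multi-level Steiner
tree problem. -/
theorem stmt_2 (ℓ : ℕ) (hℓ : 2 ≤ ℓ) (ρ : ℝ) (hρ : 1 ≤ ρ)
    (OPT : ℕ → ℝ) (hOPTnn : ∀ i ∈ Finset.Icc 1 ℓ, 0 ≤ OPT i)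
    (x y : ℝ)
    (hx : x ≤ ρ * ∑ i ∈ Finset.Icc 1 ℓ, ((i : ℝ) * ((i : ℝ) + 1) / 2) * OPT i)
    (hy : y ≤ (ℓ : ℝ) * ρ * ∑ i ∈ Finset.Icc 1 ℓ, OPT i) :
    min x y ≤ (((ℓ : ℝ) + 2) / 3) * ρ * ∑ i ∈ Finset.Icc 1 ℓ, (i : ℝ) * OPT i :=
  stmt_2_general ℓ ρ hρ OPT hOPTnn x y hx hy
end

section
/- For every integer ℓ ≥ 2, every real ρ ≥ 1, and every integer 1 ≤ i ≤ ℓ, the inequality (i(i+1)/2 − ℓ)·ρ·(2/3) + ℓ·ρ ≤ i·((ℓ+2)/3)·ρ holds. That is, the pair (t, α) = (((ℓ+2)/3)·ρ, 2/3) simultaneously satisfies all ℓ inequalities (i(i+1)/2 − ℓ)·ρ·α + ℓ·ρ ≤ i·t for 1 ≤ i ≤ ℓ. -/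
theorem combined_heuristic_slack_eq (ℓ ρ i : ℝ) :
    i * ((ℓ + 2) / 3 * ρ) - ((i * (i + 1) / 2 - ℓ) * ρ * (2 / 3) + ℓ * ρ) =
      (i - 1) * (ℓ - i) * ρ / 3 := by
  ring

theorem combined_heuristic_le {ℓ ρ i : ℝ} (hρ : 0 ≤ ρ) (h1 : 1 ≤ i) (hiℓ : i ≤ ℓ) :
    (i * (i + 1) / 2 - ℓ) * ρ * (2 / 3) + ℓ * ρ ≤ i * ((ℓ + 2) / 3 * ρ) := by
  have hslack : 0 ≤ (i - 1) * (ℓ - i) * ρ / 3 :=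
    div_nonneg (mul_nonneg (mul_nonneg (sub_nonneg.2 h1) (sub_nonneg.2 hiℓ)) hρ) zero_le_three
  linarith [combined_heuristic_slack_eq ℓ ρ i]

theorem stmt_3_general (ℓ : ℕ) (ρ : ℝ) (hρ : 1 ≤ ρ) :
    ∀ i : ℕ, 1 ≤ i → i ≤ ℓ →
      ((i : ℝ) * ((i : ℝ) + 1) / 2 - (ℓ : ℝ)) * ρ * (2 / 3) + (ℓ : ℝ) * ρ ≤
        (i : ℝ) * ((((ℓ : ℝ) + 2) / 3) * ρ) := by
  intro i h1 hiℓ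
  exact combined_heuristic_le (by linarith) (by exact_mod_cast h1) (by exact_mod_cast hiℓ)

/-- The pair `(t, α) = (((ℓ+2)/3)·ρ, 2/3)` simultaneously satisfies all ℓ inequalities
`(i(i+1)/2 − ℓ)·ρ·α + ℓ·ρ ≤ i·t` for `1 ≤ i ≤ ℓ`, arising in the analysis of the
combined top-down/bottom-up heuristic for the multi-level Steiner tree problem. -/
theorem stmt_3 (ℓ : ℕ) (hℓ : 2 ≤ ℓ) (ρ : ℝ) (hρ : 1 ≤ ρ) :
    ∀ i : ℕ, 1 ≤ i → i ≤ ℓ →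
      ((i : ℝ) * ((i : ℝ) + 1) / 2 - (ℓ : ℝ)) * ρ * (2 / 3) + (ℓ : ℝ) * ρ ≤
        (i : ℝ) * ((((ℓ : ℝ) + 2) / 3) * ρ) :=
  stmt_3_general ℓ ρ hρ
end

section
/- Let ℓ ≥ 2 be an integer, ρ ≥ 1 a real number, and let t and α be real numbers with 0 ≤ α ≤ 1 satisfying the two inequalities (ℓ(ℓ+1)/2 − ℓ)·ρ·α + ℓ·ρ ≤ ℓ·t and (2·1/2 − ℓ)·ρ·α + ℓ·ρ ≤ t. Then t ≥ ((ℓ+2)/3)·ρ. -/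
/-! Adding the first inequality to `ℓ/2` times the last cancels the `α`-terms and leaves
`(ℓ + ℓ²/2) ρ ≤ (3ℓ/2) t`; dividing by `3ℓ/2` gives the bound. -/

theorem le_of_first_add_half_mul_last {L ρ t α : ℝ} (hL : 0 < L)
    (h1 : (L * (L + 1) / 2 - L) * ρ * α + L * ρ ≤ L * t)
    (h2 : (2 * 1 / 2 - L) * ρ * α + L * ρ ≤ t) :
    (L + 2) / 3 * ρ ≤ t := by
  have key : L * (3 / 2) * ((L + 2) / 3 * ρ) ≤ L * (3 / 2) * t := by
    linear_combination h1 + (L / 2) * h2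
  exact le_of_mul_le_mul_left key (by positivity)

theorem stmt_4_general (ℓ : ℕ) (hℓ : 2 ≤ ℓ) (ρ : ℝ)
    (t α : ℝ)
    (h1 : ((ℓ : ℝ) * ((ℓ : ℝ) + 1) / 2 - (ℓ : ℝ)) * ρ * α + (ℓ : ℝ) * ρ ≤ (ℓ : ℝ) * t)
    (h2 : (2 * 1 / 2 - (ℓ : ℝ)) * ρ * α + (ℓ : ℝ) * ρ ≤ t) :
    (((ℓ : ℝ) + 2) / 3) * ρ ≤ t :=
  le_of_first_add_half_mul_last (Nat.cast_pos.mpr (by omega)) h1 h2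

/-- No approximation ratio `t` better than `((ℓ+2)/3)·ρ` can be certified by the
convex-combination argument: the inequalities for `i = ℓ` and `i = 1` already force
`t ≥ ((ℓ+2)/3)·ρ`. -/
theorem stmt_4 (ℓ : ℕ) (hℓ : 2 ≤ ℓ) (ρ : ℝ) (hρ : 1 ≤ ρ)
    (t α : ℝ) (hα0 : 0 ≤ α) (hα1 : α ≤ 1)
    (h1 : ((ℓ : ℝ) * ((ℓ : ℝ) + 1) / 2 - (ℓ : ℝ)) * ρ * α + (ℓ : ℝ) * ρ ≤ (ℓ : ℝ) * t)
    (h2 : (2 * 1 / 2 - (ℓ : ℝ)) * ρ * α + (ℓ : ℝ) * ρ ≤ t) :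
    (((ℓ : ℝ) + 2) / 3) * ρ ≤ t :=
  stmt_4_general ℓ hℓ ρ t α h1 h2
end

section
/- Let ℓ ≥ 1 be an integer and let c_1, c_2, …, c_ℓ be nonnegative real numbers with c_1 > 0 such that the nonzero ones are strictly increasing (i.e., if i < j and c_i ≠ 0 and c_j ≠ 0, then c_i < c_j). Then the maximum of c_1·y_1 + c_2·y_2 + … + c_ℓ·y_ℓ over all feasible vectors y equals max_{1 ≤ k ≤ ℓ} (1/k)·(c_1 + c_2 + … + c_k). -/
/-- A vector `y` (indexed `1, …, ℓ`) is feasible if it is nonincreasing, nonnegative,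
and sums to 1. -/
def Feasible (ℓ : ℕ) (y : ℕ → ℝ) : Prop :=
  (∀ i ∈ Finset.Icc 1 ℓ, ∀ j ∈ Finset.Icc 1 ℓ, i ≤ j → y j ≤ y i) ∧
  (∀ i ∈ Finset.Icc 1 ℓ, 0 ≤ y i) ∧
  (∑ i ∈ Finset.Icc 1 ℓ, y i = 1)

/-- Swapping the order of summation over the triangle `1 ≤ i ≤ k ≤ ℓ`. -/
lemma swap_tri (ℓ : ℕ) (f : ℕ → ℕ → ℝ) :
    ∑ i ∈ Finset.Icc 1 ℓ, ∑ k ∈ Finset.Icc i ℓ, f i k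
      = ∑ k ∈ Finset.Icc 1 ℓ, ∑ i ∈ Finset.Icc 1 k, f i k := by
  simp_rw [← Finset.Ico_add_one_right_eq_Icc]
  exact Finset.sum_Ico_Ico_comm 1 (ℓ + 1) f

/-- Telescoping sum. -/
lemma tele (ℓ : ℕ) (y : ℕ → ℝ) :
    ∀ n i, 1 ≤ i → i + n = ℓ →
      ∑ k ∈ Finset.Icc i ℓ, (if k = ℓ then y ℓ else y k - y (k + 1)) = y i := by
  intro n
  induction n with
  | zero =>
    intro i h1 h2
    simp only [Nat.add_zero] at h2
    subst h2
    simp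
  | succ n ih =>
    intro i h1 h2
    have hiℓ : i < ℓ := by omega
    have hins : Finset.Icc i ℓ = insert i (Finset.Icc (i + 1) ℓ) := by
      ext x
      simp only [Finset.mem_Icc, Finset.mem_insert]
      omega
    rw [hins, Finset.sum_insert (by simp), ih (i + 1) (by omega) (by omega),
      if_neg (by omega)]
    ring

/-- If `c_1 > 0`, the `c_i` are nonnegative, and the nonzero ones are strictly
increasing, then the maximum of `Σ c_i·y_i` over feasible `y` equals
`max_{1 ≤ k ≤ ℓ} (c_1 + … + c_k)/k`. -/
theorem stmt_6 (ℓ : ℕ) (hℓ : 1 ≤ ℓ) (c : ℕ → ℝ)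
    (hcnn : ∀ i ∈ Finset.Icc 1 ℓ, 0 ≤ c i) (hc1 : 0 < c 1)
    (hinc : ∀ i ∈ Finset.Icc 1 ℓ, ∀ j ∈ Finset.Icc 1 ℓ, i < j →
      c i ≠ 0 → c j ≠ 0 → c i < c j) :
    IsGreatest {v : ℝ | ∃ y : ℕ → ℝ, Feasible ℓ y ∧ v = ∑ i ∈ Finset.Icc 1 ℓ, c i * y i}
      ((Finset.Icc 1 ℓ).sup' (Finset.nonempty_Icc.mpr hℓ)
        (fun k => (∑ i ∈ Finset.Icc 1 k, c i) / (k : ℝ))) := by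
  have hne := Finset.nonempty_Icc.mpr hℓ
  set M := (Finset.Icc 1 ℓ).sup' hne (fun k => (∑ i ∈ Finset.Icc 1 k, c i) / (k : ℝ))
    with hMdef
  constructor
  · -- the maximum is attained
    obtain ⟨k, hk, hM⟩ := Finset.exists_mem_eq_sup' hne
      (fun k => (∑ i ∈ Finset.Icc 1 k, c i) / (k : ℝ))
    simp only [Finset.mem_Icc] at hk
    have hkpos : (0 : ℝ) < (k : ℝ) := by exact_mod_cast hk.1
    have hsub : Finset.Icc 1 k ⊆ Finset.Icc 1 ℓ := Finset.Icc_subset_Icc_right hk.2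
    refine ⟨fun i => if 1 ≤ i ∧ i ≤ k then (k : ℝ)⁻¹ else 0, ⟨?_, ?_, ?_⟩, ?_⟩
    · intro i hi j hj hij
      dsimp only
      simp only [Finset.mem_Icc] at hi hj
      by_cases hjk : 1 ≤ j ∧ j ≤ k
      · rw [if_pos hjk, if_pos ⟨by omega, by omega⟩]
      · rw [if_neg hjk]
        positivity
    · intro i hi
      dsimp only
      positivity
    · dsimp only
      rw [← Finset.sum_subset hsub (by intro x hx hx'; simp only [Finset.mem_Icc] at *; rw [if_neg (by omega)])]
      rw [Finset.sum_congr rfl (fun x hx => by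
        simp only [Finset.mem_Icc] at hx; rw [if_pos hx])]
      rw [Finset.sum_const, Nat.card_Icc]
      field_simp
      simp [nsmul_eq_mul, hkpos.ne']
    · dsimp only
      rw [hMdef, hM,
        ← Finset.sum_subset hsub (fun x hx hx' => by
          simp only [Finset.mem_Icc] at *; rw [if_neg (by omega), mul_zero]),
        Finset.sum_congr rfl (fun x hx =>
          show c x * (if 1 ≤ x ∧ x ≤ k then ((k : ℝ))⁻¹ else 0) = c x * (k : ℝ)⁻¹ by
            simp only [Finset.mem_Icc] at hx; rw [if_pos hx]),
        div_eq_mul_inv, Finset.sum_mul]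
  · -- upper bound
    rintro v ⟨y, ⟨hmono, hnn, hsum⟩, rfl⟩
    set D : ℕ → ℝ := fun k => if k = ℓ then y ℓ else y k - y (k + 1) with hDdef
    have hD : ∀ k ∈ Finset.Icc 1 ℓ, 0 ≤ D k := by
      intro k hk
      simp only [Finset.mem_Icc] at hk
      by_cases hkℓ : k = ℓ
      · simp only [hDdef, if_pos hkℓ]
        exact hnn ℓ (by simp [Finset.mem_Icc]; omega)
      · simp only [hDdef, if_neg hkℓ, sub_nonneg]
        exact hmono k (by simp [Finset.mem_Icc]; omega)
          (k + 1) (by simp [Finset.mem_Icc]; omega) (by omega)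
    have htele : ∀ i ∈ Finset.Icc 1 ℓ, ∑ k ∈ Finset.Icc i ℓ, D k = y i := by
      intro i hi
      simp only [Finset.mem_Icc] at hi
      exact tele ℓ y (ℓ - i) i hi.1 (by omega)
    have hSk : ∀ k ∈ Finset.Icc 1 ℓ, (∑ i ∈ Finset.Icc 1 k, c i) ≤ (k : ℝ) * M := by
      intro k hk
      have hkpos : (0 : ℝ) < (k : ℝ) := by
        simp only [Finset.mem_Icc] at hk; exact_mod_cast hk.1
      have := Finset.le_sup' (fun k => (∑ i ∈ Finset.Icc 1 k, c i) / (k : ℝ)) hk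
      rw [div_le_iff₀ hkpos] at this
      linarith
    calc ∑ i ∈ Finset.Icc 1 ℓ, c i * y i
        = ∑ i ∈ Finset.Icc 1 ℓ, ∑ k ∈ Finset.Icc i ℓ, c i * D k := by
          refine Finset.sum_congr rfl fun i hi => ?_
          rw [← Finset.mul_sum, htele i hi]
      _ = ∑ k ∈ Finset.Icc 1 ℓ, (∑ i ∈ Finset.Icc 1 k, c i) * D k := by
          rw [swap_tri]
          exact Finset.sum_congr rfl fun k _ => (Finset.sum_mul ..).symm
      _ ≤ ∑ k ∈ Finset.Icc 1 ℓ, ((k : ℝ) * M) * D k := by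
          exact Finset.sum_le_sum fun k hk =>
            mul_le_mul_of_nonneg_right (hSk k hk) (hD k hk)
      _ = M * ∑ k ∈ Finset.Icc 1 ℓ, (∑ i ∈ Finset.Icc 1 k, (1 : ℝ)) * D k := by
          rw [Finset.mul_sum]
          refine Finset.sum_congr rfl fun k _ => ?_
          simp [Finset.sum_const, Nat.card_Icc]
          ring
      _ = M * ∑ i ∈ Finset.Icc 1 ℓ, ∑ k ∈ Finset.Icc i ℓ, (1 : ℝ) * D k := by
          rw [swap_tri]
          congr 1
          exact Finset.sum_congr rfl fun k _ => (Finset.sum_mul ..)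
      _ = M := by
          simp only [one_mul]
          rw [Finset.sum_congr rfl htele, hsum, mul_one]
end

section
/- Let ℓ ≥ 1 be an integer and let Q = {i_1, …, i_m} be a level subset of {1, …, ℓ}. Then the maximum of val(Q, y) over all feasible vectors y equals max_{1 ≤ m' ≤ m} (Σ_{k=1}^{m'} (i_{k+1} − 1)) / i_{m'}. -/
/-- `Q` is a level subset of `{1, …, ℓ}` if `Q ⊆ {1, …, ℓ}` and `1 ∈ Q`. -/
def IsLevelSubset (ℓ : ℕ) (Q : Finset ℕ) : Prop :=
  Q ⊆ Finset.Icc 1 ℓ ∧ 1 ∈ Q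

/-- The successor of `i` in the level subset `Q`: the smallest element of `Q` larger
than `i`, with the convention that it is `ℓ + 1` if there is none. -/
def nextLevel (ℓ : ℕ) (Q : Finset ℕ) (i : ℕ) : ℕ :=
  if h : (Q.filter (fun j => i < j)).Nonempty then (Q.filter (fun j => i < j)).min' h
  else ℓ + 1

/-- `val(Q, y) = Σ_{k=1}^m (i_{k+1} − 1)·y_{i_k}`. -/
def lval (ℓ : ℕ) (Q : Finset ℕ) (y : ℕ → ℝ) : ℝ :=
  ∑ i ∈ Q, ((nextLevel ℓ Q i : ℝ) - 1) * y i

/-!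
Write `S q = ∑_{i ∈ Q, i ≤ q} (next i - 1)` and `u_q = (1/q)·𝟙_{[1,q]}`. With `y_{ℓ+1} = 0`, every
feasible `y` is the convex combination `∑_{q=1}^ℓ q (y_q - y_{q+1}) u_q` (Abel summation), and
`val(Q, u_q) = S q / q`. As `val(Q, ·)` is linear, its maximum over feasible vectors is
`max_{1 ≤ q ≤ ℓ} S q / q`. Finally `S` is constant between consecutive levels of `Q`, so
`S q ≤ q · max_{q' ∈ Q} S q' / q'` by induction on `q`, and the maximum is attained on `Q`.
-/

open Finset

def levelPrefixSum (ℓ : ℕ) (Q : Finset ℕ) (q : ℕ) : ℝ :=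
  ∑ i ∈ Q.filter (fun i => i ≤ q), ((nextLevel ℓ Q i : ℝ) - 1)

noncomputable def uniformPrefix (q i : ℕ) : ℝ := if i ≤ q then (q : ℝ)⁻¹ else 0

noncomputable def layerWeight (ℓ : ℕ) (y : ℕ → ℝ) (q : ℕ) : ℝ :=
  q * ((Set.Iic ℓ).indicator y q - (Set.Iic ℓ).indicator y (q + 1))

lemma one_le_nextLevel (ℓ : ℕ) (Q : Finset ℕ) (i : ℕ) : 1 ≤ nextLevel ℓ Q i := by
  unfold nextLevel
  split_ifs with h
  · exact Nat.one_le_of_lt (mem_filter.mp (min'_mem _ h)).2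
  · omega

lemma levelPrefixSum_nonneg (ℓ : ℕ) (Q : Finset ℕ) (q : ℕ) : 0 ≤ levelPrefixSum ℓ Q q :=
  sum_nonneg fun i _ => sub_nonneg.mpr (by exact_mod_cast one_le_nextLevel ℓ Q i)

lemma sum_filter_le_le_mul {s : Finset ℕ} (hs : 0 ∉ s) (c : ℕ → ℝ) {M : ℝ} (hM : 0 ≤ M)
    (h : ∀ q ∈ s, ∑ i ∈ s.filter (· ≤ q), c i ≤ q * M) (q : ℕ) :
    ∑ i ∈ s.filter (· ≤ q), c i ≤ q * M := by
  induction q with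
  | zero =>
    have : s.filter (· ≤ 0) = ∅ :=
      filter_eq_empty_iff.mpr fun i hi hi0 => hs (Nat.le_zero.mp hi0 ▸ hi)
    rw [this, sum_empty, Nat.cast_zero, zero_mul]
  | succ q ih =>
    by_cases hq : q + 1 ∈ s
    · exact h _ hq
    · have : s.filter (· ≤ q + 1) = s.filter (· ≤ q) :=
        filter_congr fun i hi => by have := ne_of_mem_of_not_mem hi hq; omega
      rw [this]
      push_cast
      linarith

lemma levelPrefixSum_div_le_sup' {ℓ : ℕ} {Q : Finset ℕ} (hQ : IsLevelSubset ℓ Q) (q : ℕ) :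
    levelPrefixSum ℓ Q q / q ≤ Q.sup' ⟨1, hQ.2⟩ fun q => levelPrefixSum ℓ Q q / q := by
  set M := Q.sup' ⟨1, hQ.2⟩ fun q => levelPrefixSum ℓ Q q / q
  have hle : ∀ q ∈ Q, levelPrefixSum ℓ Q q / q ≤ M := fun q hq =>
    le_sup' (fun q => levelPrefixSum ℓ Q q / q) hq
  have hM : 0 ≤ M := (levelPrefixSum_nonneg ℓ Q 1).trans (by simpa using hle 1 hQ.2)
  have h0 : 0 ∉ Q := fun h => by simpa using hQ.1 h
  have hmul : ∀ q ∈ Q, levelPrefixSum ℓ Q q ≤ q * M := fun q hq => by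
    have hq0 : (0 : ℝ) < q := by exact_mod_cast Nat.pos_of_ne_zero (ne_of_mem_of_not_mem hq h0)
    rw [mul_comm, ← div_le_iff₀ hq0]
    exact hle q hq
  rcases Nat.eq_zero_or_pos q with rfl | hq
  · simpa using hM
  · rw [div_le_iff₀ (by exact_mod_cast hq), mul_comm]
    exact sum_filter_le_le_mul h0 _ hM hmul q

lemma sum_Icc_uniformPrefix {ℓ q : ℕ} (hq1 : 1 ≤ q) (hqℓ : q ≤ ℓ) :
    ∑ i ∈ Icc 1 ℓ, uniformPrefix q i = 1 := by
  have hq : (q : ℝ) ≠ 0 := by exact_mod_cast (by omega : q ≠ 0)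
  have hfilter : (Icc 1 ℓ).filter (· ≤ q) = Icc 1 q := by
    ext i; simp only [mem_filter, mem_Icc]; omega
  simp only [uniformPrefix]
  rw [← sum_filter, hfilter, sum_const, Nat.card_Icc, nsmul_eq_mul]
  push_cast
  simp [hq]

lemma feasible_uniformPrefix {ℓ q : ℕ} (hq1 : 1 ≤ q) (hqℓ : q ≤ ℓ) :
    Feasible ℓ (uniformPrefix q) := by
  refine ⟨fun i _ j _ hij => ?_, fun i _ => ?_, sum_Icc_uniformPrefix hq1 hqℓ⟩
  · unfold uniformPrefix
    split_ifs <;> first | omega | positivity | rfl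
  · unfold uniformPrefix
    split_ifs <;> positivity

lemma lval_uniformPrefix (ℓ : ℕ) (Q : Finset ℕ) (q : ℕ) :
    lval ℓ Q (uniformPrefix q) = levelPrefixSum ℓ Q q / q := by
  simp only [lval, uniformPrefix, mul_ite, mul_zero, ← sum_filter, ← sum_mul, levelPrefixSum,
    div_eq_mul_inv]

lemma sum_Icc_sub_succ (z : ℕ → ℝ) {m n : ℕ} (hmn : m ≤ n) :
    ∑ q ∈ Icc m n, (z q - z (q + 1)) = z m - z (n + 1) := by
  simpa only [neg_sub_neg] using sum_Icc_sub hmn fun q => -z q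

lemma sum_layerWeight_mul_uniformPrefix (ℓ : ℕ) (y : ℕ → ℝ) {i : ℕ} (hi : i ∈ Icc 1 ℓ) :
    ∑ q ∈ Icc 1 ℓ, layerWeight ℓ y q * uniformPrefix q i = y i := by
  obtain ⟨hi1, hiℓ⟩ := mem_Icc.mp hi
  have hfilter : (Icc 1 ℓ).filter (i ≤ ·) = Icc i ℓ := by
    ext q; simp only [mem_filter, mem_Icc]; omega
  calc ∑ q ∈ Icc 1 ℓ, layerWeight ℓ y q * uniformPrefix q i
      = ∑ q ∈ Icc i ℓ, ((Set.Iic ℓ).indicator y q - (Set.Iic ℓ).indicator y (q + 1)) := by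
        rw [← hfilter, sum_filter]
        refine sum_congr rfl fun q hq => ?_
        have hq0 : (q : ℝ) ≠ 0 := by exact_mod_cast (Nat.one_le_iff_ne_zero.mp (mem_Icc.mp hq).1)
        unfold layerWeight uniformPrefix
        split_ifs
        · field_simp
        · rw [mul_zero]
    _ = y i := by
      rw [sum_Icc_sub_succ _ hiℓ, Set.indicator_of_mem (Set.mem_Iic.mpr hiℓ),
        Set.indicator_of_notMem (by simp), sub_zero]

lemma lval_eq_sum_layerWeight_mul {ℓ : ℕ} {Q : Finset ℕ} (hQ : Q ⊆ Icc 1 ℓ) (y : ℕ → ℝ) :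
    lval ℓ Q y = ∑ q ∈ Icc 1 ℓ, layerWeight ℓ y q * lval ℓ Q (uniformPrefix q) := by
  calc lval ℓ Q y
      = ∑ i ∈ Q, ((nextLevel ℓ Q i : ℝ) - 1) *
          ∑ q ∈ Icc 1 ℓ, layerWeight ℓ y q * uniformPrefix q i :=
        sum_congr rfl fun i hi => by rw [sum_layerWeight_mul_uniformPrefix ℓ y (hQ hi)]
    _ = _ := by
      simp only [lval, mul_sum]
      rw [sum_comm]
      exact sum_congr rfl fun q _ => sum_congr rfl fun i _ => by ring

lemma sum_layerWeight {ℓ : ℕ} {y : ℕ → ℝ} (hy : ∑ i ∈ Icc 1 ℓ, y i = 1) :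
    ∑ q ∈ Icc 1 ℓ, layerWeight ℓ y q = 1 := by
  calc ∑ q ∈ Icc 1 ℓ, layerWeight ℓ y q
      = ∑ q ∈ Icc 1 ℓ, layerWeight ℓ y q * ∑ i ∈ Icc 1 ℓ, uniformPrefix q i :=
        sum_congr rfl fun q hq => by
          rw [sum_Icc_uniformPrefix (mem_Icc.mp hq).1 (mem_Icc.mp hq).2, mul_one]
    _ = ∑ i ∈ Icc 1 ℓ, y i := by
      simp only [mul_sum]
      rw [sum_comm]
      exact sum_congr rfl fun i hi => sum_layerWeight_mul_uniformPrefix ℓ y hi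
    _ = 1 := hy

lemma layerWeight_nonneg {ℓ : ℕ} {y : ℕ → ℝ} (hy : Feasible ℓ y) {q : ℕ} (hq : q ∈ Icc 1 ℓ) :
    0 ≤ layerWeight ℓ y q := by
  have hqℓ := (mem_Icc.mp hq).2
  refine mul_nonneg q.cast_nonneg (sub_nonneg.mpr ?_)
  rw [Set.indicator_of_mem (Set.mem_Iic.mpr hqℓ)]
  by_cases hq' : q + 1 ≤ ℓ
  · rw [Set.indicator_of_mem (Set.mem_Iic.mpr hq')]
    exact hy.1 q hq (q + 1) (mem_Icc.mpr ⟨by omega, hq'⟩) (by omega)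
  · rw [Set.indicator_of_notMem (by simpa using hq')]
    exact hy.2.1 q hq

theorem stmt_7_general (ℓ : ℕ) (Q : Finset ℕ) (hQ : IsLevelSubset ℓ Q) :
    IsGreatest {v : ℝ | ∃ y : ℕ → ℝ, Feasible ℓ y ∧ v = lval ℓ Q y}
      (Q.sup' ⟨1, hQ.2⟩ fun q =>
        (∑ i ∈ Q.filter (fun i => i ≤ q), ((nextLevel ℓ Q i : ℝ) - 1)) / (q : ℝ)) := by
  change IsGreatest _ (Q.sup' _ fun q => levelPrefixSum ℓ Q q / q)
  constructor
  · obtain ⟨q, hqQ, hq⟩ := exists_mem_eq_sup' ⟨1, hQ.2⟩ fun q => levelPrefixSum ℓ Q q / q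
    obtain ⟨hq1, hqℓ⟩ := mem_Icc.mp (hQ.1 hqQ)
    exact ⟨uniformPrefix q, feasible_uniformPrefix hq1 hqℓ, by rw [hq, lval_uniformPrefix]⟩
  · rintro _ ⟨y, hy, rfl⟩
    rw [lval_eq_sum_layerWeight_mul hQ.1]
    calc ∑ q ∈ Icc 1 ℓ, layerWeight ℓ y q * lval ℓ Q (uniformPrefix q)
        ≤ ∑ q ∈ Icc 1 ℓ, layerWeight ℓ y q * Q.sup' _ fun q => levelPrefixSum ℓ Q q / q :=
          sum_le_sum fun q hq => mul_le_mul_of_nonneg_left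
            (by rw [lval_uniformPrefix]; exact levelPrefixSum_div_le_sup' hQ q)
            (layerWeight_nonneg hy hq)
      _ = Q.sup' _ fun q => levelPrefixSum ℓ Q q / q := by
          rw [← sum_mul, sum_layerWeight hy.2.2, one_mul]

/-- The maximum of `val(Q, y)` over all feasible `y` equals
`max_{1 ≤ m' ≤ m} (Σ_{k=1}^{m'} (i_{k+1} − 1)) / i_{m'}`. -/
theorem stmt_7 (ℓ : ℕ) (hℓ : 1 ≤ ℓ) (Q : Finset ℕ) (hQ : IsLevelSubset ℓ Q) :
    IsGreatest {v : ℝ | ∃ y : ℕ → ℝ, Feasible ℓ y ∧ v = lval ℓ Q y}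
      (Q.sup' ⟨1, hQ.2⟩ fun q =>
        (∑ i ∈ Q.filter (fun i => i ≤ q), ((nextLevel ℓ Q i : ℝ) - 1)) / (q : ℝ)) :=
  stmt_7_general ℓ Q hQ
end

section
/- Let ℓ ≥ 1 be an integer, let m = ⌊log₂ ℓ⌋, and let Q = {2^0, 2^1, …, 2^m}, which is a level subset of {1, …, ℓ} since 2^m ≤ ℓ. Then for every feasible vector y one has val(Q, y) ≤ 4; that is, writing i_k = 2^{k−1} for 1 ≤ k ≤ m+1 and i_{m+2} = ℓ+1, the inequality Σ_{k=1}^{m+1} (i_{k+1} − 1)·y_{i_k} ≤ 4 holds for every feasible y. -/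
/-!
The successor of the level `2 ^ k` is at most `2 ^ (k + 1)`, so
`val(Q, y) ≤ Σ_{k ≤ m} 2 ^ (k + 1) y_{2 ^ k} = 2 y_1 + Σ_{k < m} 2 ^ (k + 2) y_{2 ^ (k + 1)}`.
Since `y` is nonincreasing, `2 ^ k y_{2 ^ (k + 1)}` is at most the mass of `y` on the dyadic block
`(2 ^ k, 2 ^ (k + 1)]` (Cauchy condensation), so the sum is at most `2 y_1 + 4 Σ_{i ≥ 2} y_i ≤ 4`.
-/

open Finset

theorem nextLevel_le_of_mem {ℓ i j : ℕ} {Q : Finset ℕ} (hj : j ∈ Q) (hij : i < j) :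
    nextLevel ℓ Q i ≤ j := by
  have hne : (Q.filter (fun j => i < j)).Nonempty := ⟨j, mem_filter.2 ⟨hj, hij⟩⟩
  rw [nextLevel, dif_pos hne]
  exact min'_le _ _ (mem_filter.2 ⟨hj, hij⟩)

theorem nextLevel_le_succ {ℓ i : ℕ} {Q : Finset ℕ} (hQ : Q ⊆ Icc 1 ℓ) :
    nextLevel ℓ Q i ≤ ℓ + 1 := by
  unfold nextLevel
  split_ifs with hne
  · have hmem := (mem_filter.1 (min'_mem _ hne)).1
    have := (mem_Icc.1 (hQ hmem)).2
    omega
  · rfl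

theorem lval_le_sum_mul {ℓ : ℕ} {Q : Finset ℕ} {y : ℕ → ℝ} {b : ℕ → ℕ}
    (hy : ∀ i ∈ Q, 0 ≤ y i) (hb : ∀ i ∈ Q, nextLevel ℓ Q i ≤ b i) :
    lval ℓ Q y ≤ ∑ i ∈ Q, (b i : ℝ) * y i := by
  refine sum_le_sum fun i hi => mul_le_mul_of_nonneg_right ?_ (hy i hi)
  have : (nextLevel ℓ Q i : ℝ) ≤ b i := by exact_mod_cast hb i hi
  linarith

theorem sum_pow_two_mul_le {m : ℕ} {y : ℕ → ℝ} (hy : AntitoneOn y (Icc 1 (2 ^ m))) :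
    ∑ k ∈ range (m + 1), (2 : ℝ) ^ (k + 1) * y (2 ^ k) + 2 * y 1 ≤
      4 * ∑ j ∈ Icc 1 (2 ^ m), y j := by
  -- extend `y` beyond `2 ^ m` by a constant so that it is nonincreasing on all of `ℕ⁺`
  have hN : 1 ≤ 2 ^ m := Nat.one_le_two_pow
  set f : ℕ → ℝ := fun k => y (min k (2 ^ m)) with hf
  have hfy : ∀ k ∈ Icc 1 (2 ^ m), f k = y k := fun k hk => by
    simp [hf, (mem_Icc.1 hk).2]
  have hanti : ∀ ⦃a b⦄, 1 < a → a ≤ b → f b ≤ f a := fun a b ha hab =>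
    hy (by simp; omega) (by simp; omega) (by omega)
  have hcond := sum_condensed_le hanti m
  have hpow : ∀ k ∈ range (m + 1), f (2 ^ k) = y (2 ^ k) := fun k hk =>
    hfy _ (mem_Icc.2 ⟨Nat.one_le_two_pow,
      Nat.pow_le_pow_right two_pos (Nat.lt_succ_iff.1 (mem_range.1 hk))⟩)
  have htail : ∑ k ∈ Ico 2 (2 ^ m + 1), f k = ∑ k ∈ Ico 2 (2 ^ m + 1), y k :=
    sum_congr rfl fun k hk => hfy k (by simp at hk ⊢; omega)
  rw [sum_congr rfl fun k hk => by rw [hpow k hk], htail, hfy 1 (mem_Icc.2 ⟨le_rfl, hN⟩)] at hcond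
  simp only [nsmul_eq_mul, Nat.cast_pow, Nat.cast_ofNat] at hcond
  have hsplit : ∑ j ∈ Icc 1 (2 ^ m), y j = y 1 + ∑ k ∈ Ico 2 (2 ^ m + 1), y k := by
    rw [← Ico_add_one_right_eq_Icc, sum_eq_sum_Ico_succ_bot (by omega)]
  have hdouble : ∑ k ∈ range (m + 1), (2 : ℝ) ^ (k + 1) * y (2 ^ k) =
      2 * ∑ k ∈ range (m + 1), (2 : ℝ) ^ k * y (2 ^ k) := by
    rw [mul_sum]
    exact sum_congr rfl fun k _ => by ring
  rw [hdouble, hsplit]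
  linarith

def dyadicLevels (m : ℕ) : Finset ℕ :=
  (range (m + 1)).image (fun k => 2 ^ k)

theorem mem_dyadicLevels {m x : ℕ} : x ∈ dyadicLevels m ↔ ∃ k ≤ m, 2 ^ k = x := by
  simp [dyadicLevels]

theorem dyadicLevels_subset_Icc {ℓ m : ℕ} (hm : 2 ^ m ≤ ℓ) : dyadicLevels m ⊆ Icc 1 ℓ := by
  intro x hx
  obtain ⟨k, hk, rfl⟩ := mem_dyadicLevels.1 hx
  exact mem_Icc.2 ⟨Nat.one_le_two_pow, (Nat.pow_le_pow_right two_pos hk).trans hm⟩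

theorem isLevelSubset_dyadicLevels {ℓ m : ℕ} (hm : 2 ^ m ≤ ℓ) :
    IsLevelSubset ℓ (dyadicLevels m) :=
  ⟨dyadicLevels_subset_Icc hm, mem_dyadicLevels.2 ⟨0, Nat.zero_le m, rfl⟩⟩

theorem nextLevel_dyadicLevels_le {ℓ m k : ℕ} (hm : 2 ^ m ≤ ℓ) (hℓ : ℓ < 2 ^ (m + 1))
    (hk : k ≤ m) : nextLevel ℓ (dyadicLevels m) (2 ^ k) ≤ 2 ^ (k + 1) := by
  rcases hk.lt_or_eq with hk | rfl
  · exact nextLevel_le_of_mem (mem_dyadicLevels.2 ⟨k + 1, hk, rfl⟩)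
      (Nat.pow_lt_pow_right one_lt_two k.lt_succ_self)
  · exact (nextLevel_le_succ (dyadicLevels_subset_Icc hm)).trans hℓ

theorem lval_dyadicLevels_le {ℓ m : ℕ} {y : ℕ → ℝ} (hm : 2 ^ m ≤ ℓ) (hℓ : ℓ < 2 ^ (m + 1))
    (hy : ∀ i ∈ Icc 1 ℓ, 0 ≤ y i) :
    lval ℓ (dyadicLevels m) y ≤ ∑ k ∈ range (m + 1), (2 : ℝ) ^ (k + 1) * y (2 ^ k) := by
  have hQ := dyadicLevels_subset_Icc hm
  calc lval ℓ (dyadicLevels m) y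
      ≤ ∑ i ∈ dyadicLevels m, ((2 * i : ℕ) : ℝ) * y i :=
        lval_le_sum_mul (fun i hi => hy i (hQ hi)) fun i hi => by
          obtain ⟨k, hk, rfl⟩ := mem_dyadicLevels.1 hi
          simpa [pow_succ, mul_comm] using nextLevel_dyadicLevels_le hm hℓ hk
    _ = ∑ k ∈ range (m + 1), (2 : ℝ) ^ (k + 1) * y (2 ^ k) := by
        rw [dyadicLevels, sum_image fun a _ b _ hab => Nat.pow_right_injective le_rfl hab]
        exact sum_congr rfl fun k _ => by push_cast; ring

/-- For the powers-of-two level subset `Q = {2^0, 2^1, …, 2^⌊log₂ ℓ⌋}`, one has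
`val(Q, y) ≤ 4` for every feasible `y` (the 4-approximation of Charikar et al.). -/
theorem stmt_8 (ℓ : ℕ) (hℓ : 1 ≤ ℓ) :
    IsLevelSubset ℓ ((Finset.range (Nat.log 2 ℓ + 1)).image (fun k => 2 ^ k)) ∧
    ∀ y : ℕ → ℝ, Feasible ℓ y →
      lval ℓ ((Finset.range (Nat.log 2 ℓ + 1)).image (fun k => 2 ^ k)) y ≤ 4 := by
  have hm : 2 ^ Nat.log 2 ℓ ≤ ℓ := Nat.pow_log_le_self 2 (by omega)
  have hlt : ℓ < 2 ^ (Nat.log 2 ℓ + 1) := Nat.lt_pow_succ_log_self one_lt_two ℓ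
  refine ⟨isLevelSubset_dyadicLevels hm, fun y ⟨hmono, hnonneg, hsum⟩ => ?_⟩
  have hanti : AntitoneOn y (Icc 1 (2 ^ Nat.log 2 ℓ)) :=
    fun i hi j hj hij => hmono i (Icc_subset_Icc_right hm hi) j (Icc_subset_Icc_right hm hj) hij
  have hprefix : ∑ j ∈ Icc 1 (2 ^ Nat.log 2 ℓ), y j ≤ 1 :=
    hsum ▸ sum_le_sum_of_subset_of_nonneg (Icc_subset_Icc_right hm) fun i hi _ => hnonneg i hi
  have hy1 : 0 ≤ y 1 := hnonneg 1 (mem_Icc.2 ⟨le_rfl, hℓ⟩)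
  have hval := lval_dyadicLevels_le hm hlt hnonneg
  have hcond := sum_pow_two_mul_le hanti
  change lval ℓ (dyadicLevels _) y ≤ 4
  linarith
end

section
/- The supremum, over all pairs (y_1, y_2) of real numbers with y_1 ≥ y_2 ≥ 0 and y_1 + y_2 = 1, of min(2·y_1, y_1 + 2·y_2) equals 4/3, and it is attained at (y_1, y_2) = (2/3, 1/3). In other words, t_2 = 4/3. -/
/-- `t_2 = 4/3`: the supremum over `y₁ ≥ y₂ ≥ 0` with `y₁ + y₂ = 1` of
`min(2y₁, y₁ + 2y₂)` equals `4/3`, attained at `(y₁, y₂) = (2/3, 1/3)`. -/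
theorem stmt_10 :
    IsGreatest {v : ℝ | ∃ y₁ y₂ : ℝ, y₂ ≤ y₁ ∧ 0 ≤ y₂ ∧ y₁ + y₂ = 1 ∧
        v = min (2 * y₁) (y₁ + 2 * y₂)} (4 / 3) ∧
    min (2 * (2 / 3 : ℝ)) (2 / 3 + 2 * (1 / 3)) = 4 / 3 := by
  refine ⟨⟨⟨2 / 3, 1 / 3, by norm_num⟩, ?_⟩, by norm_num⟩
  rintro v ⟨y₁, y₂, -, -, hsum, rfl⟩
  -- The min is at most the average (1/3)·2y₁ + (2/3)·(y₁ + 2y₂) = (4/3)(y₁ + y₂).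
  have h₁ := min_le_left (2 * y₁) (y₁ + 2 * y₂)
  have h₂ := min_le_right (2 * y₁) (y₁ + 2 * y₂)
  linarith
end

section
/- The supremum, over all triples (y_1, y_2, y_3) of real numbers with y_1 ≥ y_2 ≥ y_3 ≥ 0 and y_1 + y_2 + y_3 = 1, of min(3·y_1, y_1 + 3·y_2, 2·y_1 + 3·y_3, y_1 + 2·y_2 + 3·y_3) equals 3/2. In other words, t_3 = 3/2. -/
/-! The point `y = (1/2, 1/3, 1/6)` makes `3y₁`, `y₁ + 3y₂` and `2y₁ + 3y₃` all equal to `3/2`.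
Conversely, `(y₁ + 3y₂) + (2y₁ + 3y₃) = 3(y₁ + y₂ + y₃) = 3`, so the smaller of these two values,
and hence the minimum of all four, is at most `3/2`. -/

theorem min_le_add_div_two {α : Type*} [Field α] [LinearOrder α] [IsStrictOrderedRing α]
    (a b : α) : min a b ≤ (a + b) / 2 := by
  rw [le_div_iff₀ two_pos]
  linarith [min_le_left a b, min_le_right a b]

theorem min_four_le_three_halves {y₁ y₂ y₃ : ℝ} (hsum : y₁ + y₂ + y₃ = 1) :
    min (min (3 * y₁) (y₁ + 3 * y₂)) (min (2 * y₁ + 3 * y₃) (y₁ + 2 * y₂ + 3 * y₃)) ≤ 3 / 2 :=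
  calc _ ≤ min (y₁ + 3 * y₂) (2 * y₁ + 3 * y₃) := min_le_min (min_le_right _ _) (min_le_left _ _)
    _ ≤ ((y₁ + 3 * y₂) + (2 * y₁ + 3 * y₃)) / 2 := min_le_add_div_two _ _
    _ = 3 / 2 := by linear_combination (3 / 2 : ℝ) * hsum

/-- `t_3 = 3/2`: the supremum over `y₁ ≥ y₂ ≥ y₃ ≥ 0` with `y₁ + y₂ + y₃ = 1` of
`min(3y₁, y₁ + 3y₂, 2y₁ + 3y₃, y₁ + 2y₂ + 3y₃)` equals `3/2`. -/
theorem stmt_11 :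
    IsGreatest {v : ℝ | ∃ y₁ y₂ y₃ : ℝ, y₂ ≤ y₁ ∧ y₃ ≤ y₂ ∧ 0 ≤ y₃ ∧ y₁ + y₂ + y₃ = 1 ∧
        v = min (min (3 * y₁) (y₁ + 3 * y₂)) (min (2 * y₁ + 3 * y₃) (y₁ + 2 * y₂ + 3 * y₃))}
      (3 / 2) := by
  refine ⟨⟨1 / 2, 1 / 3, 1 / 6, by norm_num⟩, ?_⟩
  rintro v ⟨y₁, y₂, y₃, -, -, -, hsum, rfl⟩
  exact min_four_le_three_halves hsum
end

section
/- Define matrices P_ℓ and M_ℓ of size 2^{ℓ−1} × ℓ recursively by P_1 = M_1 = [1], and for ℓ ≥ 2: P_ℓ is the block matrix with blocks P_{ℓ−1} (top-left, size 2^{ℓ−2} × (ℓ−1)), the zero column 0_{2^{ℓ−2}×1} (top-right), the zero block 0_{2^{ℓ−2}×(ℓ−1)} (bottom-left), and the all-ones column 1_{2^{ℓ−2}×1} (bottom-right); M_ℓ is the block matrix with blocks P_{ℓ−1} + M_{ℓ−1} (top-left), 0_{2^{ℓ−2}×1} (top-right), M_{ℓ−1} (bottom-left), and ℓ·1_{2^{ℓ−2}×1}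 (bottom-right). Then for every ℓ ≥ 1 and every vector y ∈ ℝ^ℓ, the multiset of the 2^{ℓ−1} entries of the vector M_ℓ·y equals the multiset { val(Q, y) : Q a level subset of {1, …, ℓ} }. -/
/-- The finite collection of all level subsets of `{1, …, ℓ}`. -/
def levelSubsets (ℓ : ℕ) : Finset (Finset ℕ) :=
  (Finset.Icc 1 ℓ).powerset.filter (fun Q => 1 ∈ Q)

/-- The recursively defined matrix `P_ℓ` (here with `ℓ = n + 1`):
`P_1 = [1]` and `P_ℓ = [P_{ℓ-1}, 0; 0, 1]` in block form. -/
def Pmat : (n : ℕ) → Matrix (Fin (2 ^ n)) (Fin (n + 1)) ℝ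
  | 0 => fun _ _ => 1
  | n + 1 =>
      Matrix.reindex (finSumFinEquiv.trans (finCongr (by rw [pow_succ, mul_two])))
        finSumFinEquiv
        (Matrix.fromBlocks (Pmat n) 0 0 (fun _ _ => 1))

/-- The recursively defined matrix `M_ℓ` (here with `ℓ = n + 1`):
`M_1 = [1]` and `M_ℓ = [P_{ℓ-1} + M_{ℓ-1}, 0; M_{ℓ-1}, ℓ·1]` in block form. -/
def Mmat : (n : ℕ) → Matrix (Fin (2 ^ n)) (Fin (n + 1)) ℝ
  | 0 => fun _ _ => 1
  | n + 1 =>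
      Matrix.reindex (finSumFinEquiv.trans (finCongr (by rw [pow_succ, mul_two])))
        finSumFinEquiv
        (Matrix.fromBlocks (Pmat n + Mmat n) 0 (Mmat n) (fun _ _ => ((n + 2 : ℕ) : ℝ)))


lemma mem_levelSubsets {ℓ : ℕ} {Q : Finset ℕ} :
    Q ∈ levelSubsets ℓ ↔ Q ⊆ Finset.Icc 1 ℓ ∧ 1 ∈ Q := by
  simp [levelSubsets]

lemma sup_mem_of_levelSubsets {ℓ : ℕ} {Q : Finset ℕ} (hQ : Q ∈ levelSubsets ℓ) :
    Q.sup id ∈ Q := by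
  obtain ⟨h1, h2⟩ := mem_levelSubsets.mp hQ
  have hne : Q.Nonempty := ⟨1, h2⟩
  rw [← Finset.sup'_eq_sup hne id]
  exact Finset.sup'_mem (Q : Set ℕ) (fun x hx y hy => by
    rcases le_total x y with h | h
    · simpa [sup_eq_right.mpr h] using hy
    · simpa [sup_eq_left.mpr h] using hx) _ _ _ (fun i hi => hi)

lemma le_sup_of_mem {Q : Finset ℕ} {i : ℕ} (hi : i ∈ Q) : i ≤ Q.sup id :=
  Finset.le_sup (f := id) hi

-- value split
lemma levelSubsets_succ_val (n : ℕ) :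
    (levelSubsets (n + 2)).val =
      (levelSubsets (n + 1)).val + (levelSubsets (n + 1)).val.map (insert (n + 2)) := by
  classical
  have hnotmem : ∀ Q ∈ levelSubsets (n + 1), n + 2 ∉ Q := by
    intro Q hQ h
    have := (mem_levelSubsets.mp hQ).1 h
    simp [Finset.mem_Icc] at this
  have hinj : Set.InjOn (insert (n + 2)) (levelSubsets (n + 1) : Set (Finset ℕ)) := by
    intro a ha b hb hab
    have ha' := hnotmem a ha
    have hb' := hnotmem b hb
    have : (insert (n+2) a).erase (n+2) = (insert (n+2) b).erase (n+2) := by rw [hab]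
    rwa [Finset.erase_insert ha', Finset.erase_insert hb'] at this
  have himg : ((levelSubsets (n + 1)).image (insert (n + 2))).val =
      (levelSubsets (n + 1)).val.map (insert (n + 2)) :=
    Finset.image_val_of_injOn hinj
  rw [← himg]
  have hdisj : Disjoint (levelSubsets (n + 1)) ((levelSubsets (n + 1)).image (insert (n + 2))) := by
    rw [Finset.disjoint_left]
    intro Q hQ hQ'
    obtain ⟨R, hR, rfl⟩ := Finset.mem_image.mp hQ'
    exact hnotmem _ hQ (Finset.mem_insert_self _ _)
  suffices h : levelSubsets (n + 2) = (levelSubsets (n + 1)).disjUnion _ hdisj by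
    rw [h]; rfl
  ext Q
  simp only [Finset.mem_disjUnion, mem_levelSubsets, Finset.mem_image]
  constructor
  · rintro ⟨hsub, h1⟩
    by_cases h : n + 2 ∈ Q
    · right
      refine ⟨Q.erase (n + 2), ⟨?_, ?_⟩, by rw [Finset.insert_erase h]⟩
      · intro i hi
        have := hsub (Finset.mem_of_mem_erase hi)
        have hne := Finset.ne_of_mem_erase hi
        simp [Finset.mem_Icc] at this ⊢
        omega
      · exact Finset.mem_erase.mpr ⟨by omega, h1⟩
    · left
      refine ⟨fun i hi => ?_, h1⟩
      have := hsub hi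
      have : i ≠ n + 2 := fun he => h (he ▸ hi)
      simp [Finset.mem_Icc] at *
      omega
  · rintro (⟨hsub, h1⟩ | ⟨R, ⟨hsub, h1⟩, rfl⟩)
    · exact ⟨hsub.trans (Finset.Icc_subset_Icc_right (by omega)), h1⟩
    · constructor
      · intro i hi
        rcases Finset.mem_insert.mp hi with rfl | hi
        · simp [Finset.mem_Icc]
        · exact (hsub.trans (Finset.Icc_subset_Icc_right (by omega))) hi
      · exact Finset.mem_insert_of_mem h1

lemma mem_le_of_levelSubsets {n : ℕ} {Q : Finset ℕ} (hQ : Q ∈ levelSubsets n)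
    {i : ℕ} (hi : i ∈ Q) : 1 ≤ i ∧ i ≤ n := by
  have := (mem_levelSubsets.mp hQ).1 hi
  simpa [Finset.mem_Icc] using this

lemma nextLevel_sup {n : ℕ} {Q : Finset ℕ} (hQ : Q ∈ levelSubsets (n + 1)) (ℓ : ℕ) :
    nextLevel ℓ Q (Q.sup id) = ℓ + 1 := by
  rw [nextLevel, dif_neg]
  simp only [Finset.not_nonempty_iff_eq_empty, Finset.filter_eq_empty_iff]
  intro j hj
  simpa using le_sup_of_mem hj

lemma lvalA {n : ℕ} {Q : Finset ℕ} (hQ : Q ∈ levelSubsets (n + 1)) (y : ℕ → ℝ) :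
    lval (n + 2) Q y = lval (n + 1) Q y + y (Q.sup id) := by
  have hm : Q.sup id ∈ Q := sup_mem_of_levelSubsets hQ
  rw [lval, lval, ← Finset.sum_erase_add _ _ hm, ← Finset.sum_erase_add _ _ hm]
  have hsum : ∀ i ∈ Q.erase (Q.sup id),
      ((nextLevel (n + 2) Q i : ℝ) - 1) * y i = ((nextLevel (n + 1) Q i : ℝ) - 1) * y i := by
    intro i hi
    have hiQ := Finset.mem_of_mem_erase hi
    have hlt : i < Q.sup id := lt_of_le_of_ne (le_sup_of_mem hiQ) (Finset.ne_of_mem_erase hi)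
    have hne : (Q.filter (fun j => i < j)).Nonempty :=
      ⟨Q.sup id, Finset.mem_filter.mpr ⟨hm, hlt⟩⟩
    rw [nextLevel, nextLevel, dif_pos hne, dif_pos hne]
  rw [Finset.sum_congr rfl hsum, nextLevel_sup hQ (n+2), nextLevel_sup hQ (n+1)]
  push_cast
  ring

lemma notmem_of_levelSubsets {n : ℕ} {Q : Finset ℕ} (hQ : Q ∈ levelSubsets (n + 1)) :
    n + 2 ∉ Q := fun h => by have := mem_le_of_levelSubsets hQ h; omega

lemma sup_insert_of_levelSubsets {n : ℕ} {Q : Finset ℕ} (hQ : Q ∈ levelSubsets (n + 1)) :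
    (insert (n + 2) Q).sup id = n + 2 := by
  rw [Finset.sup_insert]
  have : Q.sup id ≤ n + 1 := Finset.sup_le (fun i hi => (mem_le_of_levelSubsets hQ hi).2)
  simp only [id]
  omega

lemma lvalB {n : ℕ} {Q : Finset ℕ} (hQ : Q ∈ levelSubsets (n + 1)) (y : ℕ → ℝ) :
    lval (n + 2) (insert (n + 2) Q) y = lval (n + 1) Q y + ((n + 2 : ℕ) : ℝ) * y (n + 2) := by
  have hnot : n + 2 ∉ Q := notmem_of_levelSubsets hQ
  rw [lval, Finset.sum_insert hnot]
  have hterm : nextLevel (n + 2) (insert (n + 2) Q) (n + 2) = n + 3 := by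
    rw [nextLevel, dif_neg]
    simp only [Finset.not_nonempty_iff_eq_empty, Finset.filter_eq_empty_iff]
    intro j hj
    rcases Finset.mem_insert.mp hj with rfl | hj
    · simp
    · have := mem_le_of_levelSubsets hQ hj; omega
  have hsum : ∀ i ∈ Q,
      ((nextLevel (n + 2) (insert (n + 2) Q) i : ℝ) - 1) * y i
        = ((nextLevel (n + 1) Q i : ℝ) - 1) * y i := by
    intro i hi
    have hile : i ≤ n + 1 := (mem_le_of_levelSubsets hQ hi).2
    have hfeq : (insert (n + 2) Q).filter (fun j => i < j)
        = insert (n + 2) (Q.filter (fun j => i < j)) := by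
      rw [Finset.filter_insert, if_pos (by omega)]
    have hne2 : ((insert (n + 2) Q).filter (fun j => i < j)).Nonempty := by
      rw [hfeq]; exact ⟨n + 2, Finset.mem_insert_self _ _⟩
    by_cases h : (Q.filter (fun j => i < j)).Nonempty
    · rw [nextLevel, nextLevel, dif_pos hne2, dif_pos h]
      have hmin : (Q.filter (fun j => i < j)).min' h ≤ n + 1 := by
        have := Finset.min'_mem _ h
        exact (mem_le_of_levelSubsets hQ (Finset.mem_filter.mp this).1).2
      have heq : ((insert (n + 2) Q).filter (fun j => i < j)).min' hne2
          = (Q.filter (fun j => i < j)).min' h := by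
        apply le_antisymm
        · exact Finset.min'_le _ _ (by rw [hfeq]; exact Finset.mem_insert_of_mem (Finset.min'_mem _ h))
        · apply Finset.le_min'
          intro j hj
          rw [hfeq] at hj
          rcases Finset.mem_insert.mp hj with rfl | hj
          · omega
          · exact Finset.min'_le _ _ hj
      rw [heq]
    · have hf : Q.filter (fun j => i < j) = ∅ := Finset.not_nonempty_iff_eq_empty.mp h
      rw [nextLevel, nextLevel, dif_pos hne2, dif_neg h]
      have heq : ((insert (n + 2) Q).filter (fun j => i < j)).min' hne2 = n + 2 := by
        have hm := Finset.mem_filter.mp (Finset.min'_mem _ hne2)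
        rcases Finset.mem_insert.mp hm.1 with he | hmq
        · exact he
        · exact absurd (Finset.mem_filter.mpr ⟨hmq, hm.2⟩) (by simp [hf])
      rw [heq]
  rw [Finset.sum_congr rfl hsum, hterm, lval]
  push_cast
  ring

lemma univ_val_map_equiv {α β γ : Type*} [Fintype α] [Fintype β] (e : α ≃ β) (g : β → γ) :
    Finset.univ.val.map g = Finset.univ.val.map (fun a : α => g (e a)) := by
  have h : Finset.univ.val.map e = (Finset.univ : Finset β).val :=
    congrArg Finset.val (Finset.map_univ_equiv e)
  rw [← h, Multiset.map_map]
  rfl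

lemma univ_val_sum {α β : Type*} [Fintype α] [Fintype β] :
    (Finset.univ : Finset (α ⊕ β)).val =
      Finset.univ.val.map Sum.inl + Finset.univ.val.map Sum.inr := by
  rw [← Finset.univ_disjSum_univ, Finset.val_disjSum]
  rfl


lemma key_pair (n : ℕ) (y : ℕ → ℝ) :
    Finset.univ.val.map (fun r : Fin (2 ^ n) =>
        ((Pmat n).mulVec (fun j : Fin (n + 1) => y (j.val + 1)) r,
         (Mmat n).mulVec (fun j : Fin (n + 1) => y (j.val + 1)) r)) =
      (levelSubsets (n + 1)).val.map (fun Q => (y (Q.sup id), lval (n + 1) Q y)) := by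
  induction n with
  | zero =>
    have h1 : levelSubsets 1 = {({1} : Finset ℕ)} := by decide
    rw [h1]
    have h2 : (Finset.univ : Finset (Fin (2 ^ 0))) = {0} := by decide
    rw [h2]
    simp [Pmat, Mmat, Matrix.mulVec, dotProduct, lval, nextLevel,
      Finset.filter_singleton]
    ring
  | succ n ih =>
    rw [Pmat, Mmat, Matrix.reindex_apply, Matrix.reindex_apply]
    rw [univ_val_map_equiv (finSumFinEquiv.trans
      (finCongr (by rw [pow_succ, mul_two] : 2 ^ n + 2 ^ n = 2 ^ (n + 1))))]
    simp only [Matrix.submatrix_mulVec_equiv, Function.comp_apply, Equiv.symm_symm,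
      Equiv.symm_apply_apply, Matrix.fromBlocks_mulVec]
    erw [Matrix.fromBlocks_mulVec, Matrix.fromBlocks_mulVec]
    rw [univ_val_sum, Multiset.map_add]
    simp only [Multiset.map_map, Function.comp_apply, Sum.elim_inl, Sum.elim_inr,
      Pi.add_apply, Matrix.zero_mulVec, Pi.zero_apply, add_zero, zero_add,
      Matrix.add_mulVec]
    have hv1 : (((fun j : Fin (n + 1 + 1) => y (j.val + 1))
          ∘ ⇑(finSumFinEquiv (m := n + 1) (n := 1))) ∘ Sum.inl)
        = (fun j : Fin (n + 1) => y (j.val + 1)) := rfl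
    have hv2 : (((fun j : Fin (n + 1 + 1) => y (j.val + 1))
          ∘ ⇑(finSumFinEquiv (m := n + 1) (n := 1))) ∘ Sum.inr)
        = (fun _ : Fin 1 => y (n + 2)) := by
      funext j
      have hj : j = 0 := Subsingleton.elim _ _
      subst hj
      simp [finSumFinEquiv]
    rw [hv1, hv2]
    have hcol1 : Matrix.mulVec (fun (_ : Fin (2 ^ n)) (_ : Fin 1) => (1 : ℝ))
        (fun _ : Fin 1 => y (n + 2)) = fun _ => y (n + 2) := by
      funext x; simp [Matrix.mulVec, dotProduct]
    have hcol2 : Matrix.mulVec (fun (_ : Fin (2 ^ n)) (_ : Fin 1) => ((n + 2 : ℕ) : ℝ))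
        (fun _ : Fin 1 => y (n + 2)) = fun _ => ((n + 2 : ℕ) : ℝ) * y (n + 2) := by
      funext x; simp [Matrix.mulVec, dotProduct]
    rw [hcol1, hcol2]
    simp only [Function.comp_def, Sum.elim_inl, Sum.elim_inr, Pi.add_apply]
    have hnn : n + 1 + 1 = n + 2 := rfl
    rw [hnn, levelSubsets_succ_val, Multiset.map_add, Multiset.map_map]
    congr 1
    · have hsplit : (fun x : Fin (2 ^ n) =>
          ((Pmat n).mulVec (fun j : Fin (n+1) => y (j.val + 1)) x,
           (Pmat n).mulVec (fun j : Fin (n+1) => y (j.val + 1)) x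
             + (Mmat n).mulVec (fun j : Fin (n+1) => y (j.val + 1)) x))
          = (fun q : ℝ × ℝ => (q.1, q.1 + q.2)) ∘ (fun x =>
          ((Pmat n).mulVec (fun j : Fin (n+1) => y (j.val + 1)) x,
           (Mmat n).mulVec (fun j : Fin (n+1) => y (j.val + 1)) x)) := rfl
      rw [hsplit, ← Multiset.map_map, ih, Multiset.map_map]
      apply Multiset.map_congr rfl
      intro Q hQ
      have hQ' : Q ∈ levelSubsets (n + 1) := hQ
      simp only [Function.comp_apply]
      exact Prod.ext rfl (by rw [lvalA hQ' y]; ring)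
    · have hsplit : (fun x : Fin (2 ^ n) =>
          (y (n + 2),
           (Mmat n).mulVec (fun j : Fin (n+1) => y (j.val + 1)) x
             + ((n + 2 : ℕ) : ℝ) * y (n + 2)))
          = (fun q : ℝ × ℝ => (y (n + 2), q.2 + ((n + 2 : ℕ) : ℝ) * y (n + 2))) ∘ (fun x =>
          ((Pmat n).mulVec (fun j : Fin (n+1) => y (j.val + 1)) x,
           (Mmat n).mulVec (fun j : Fin (n+1) => y (j.val + 1)) x)) := rfl
      rw [hsplit, ← Multiset.map_map, ih, Multiset.map_map]
      apply Multiset.map_congr rfl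
      intro Q hQ
      have hQ' : Q ∈ levelSubsets (n + 1) := hQ
      simp only [Function.comp_apply]
      exact Prod.ext (by rw [sup_insert_of_levelSubsets hQ']) (by rw [lvalB hQ' y])

/-- For every `ℓ = n + 1 ≥ 1` and every vector `y`, the multiset of the `2^{ℓ−1}`
entries of `M_ℓ · y` equals the multiset of values `val(Q, y)` over all level subsets
`Q` of `{1, …, ℓ}`. -/
theorem stmt_16 (n : ℕ) (y : ℕ → ℝ) :
    Finset.univ.val.map
        (fun r : Fin (2 ^ n) => (Mmat n).mulVec (fun j : Fin (n + 1) => y (j.val + 1)) r) =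
      (levelSubsets (n + 1)).val.map (fun Q => lval (n + 1) Q y) := by
  have h := congrArg (Multiset.map Prod.snd) (key_pair n y)
  simpa [Multiset.map_map, Function.comp_def] using h
end

section
/- Consider an MLST instance with source s ∈ T_ℓ and the associated flow-based ILP. In every feasible ILP solution (x, y, f) that minimizes the objective Σ_{uv∈E} c(uv)·(y_{uv} + y_{vu}), for every 1 ≤ i ≤ ℓ the undirected edge set E_i = {uv ∈ E : y_{uv} ≥ i or y_{vu} ≥ i} forms a connected acyclic subgraph of G containing all vertices of T_i; in particular E_i is a Steiner tree for T_i, and E_ℓ ⊆ E_{ℓ−1} ⊆ … ⊆ E_1. -/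
/-- The vertices covered by a set of edges. -/
def edgeSupport {V : Type*} (S : Set (Sym2 V)) : Set V :=
  {v | ∃ e ∈ S, v ∈ e}

/-- The edges of `S` form a connected subgraph containing all vertices of `T`:
all vertices of `T` together with all endpoints of edges of `S` are mutually
reachable using only edges of `S`. -/
def SpansConn {V : Type*} (S : Set (Sym2 V)) (T : Set V) : Prop :=
  ∀ u ∈ T ∪ edgeSupport S, ∀ v ∈ T ∪ edgeSupport S,
    (SimpleGraph.fromEdgeSet S).Reachable u v

/-- `L(v)`: the largest level `i ∈ {1, …, ℓ}` with `v ∈ T i` (`0` if none). -/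
def Lvl {V : Type*} [DecidableEq V] (ℓ : ℕ) (T : ℕ → Finset V) (v : V) : ℕ :=
  ((Finset.Icc 1 ℓ).filter (fun i => v ∈ T i)).sup id

/-- Feasibility of a solution `(x, y, f)` of the flow-based ILP for the MLST problem:
variables live on arcs (ordered adjacent pairs) of `G`; flow conservation routes
`|T₁| − 1` units from the source `s` to the bottom-level terminals; capacity,
in-degree, linking, propagation and terminal-level constraints as in the paper. -/
def ILPFeasible {V : Type*} [Fintype V] [DecidableEq V] (G : SimpleGraph V)
    (ℓ : ℕ) (T : ℕ → Finset V) (s : V)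
    (x y : V → V → ℕ) (f : V → V → ℝ) : Prop :=
  (∀ u v : V, ¬ G.Adj u v → x u v = 0) ∧
  (∀ u v : V, ¬ G.Adj u v → y u v = 0) ∧
  (∀ u v : V, ¬ G.Adj u v → f u v = 0) ∧
  (∀ u v : V, x u v ≤ 1) ∧
  (∀ u v : V, x u v ≤ y u v ∧ y u v ≤ ℓ * x u v) ∧
  (∀ u v : V, 0 ≤ f u v ∧ f u v ≤ (((T 1).card : ℝ) - 1) * (x u v : ℝ)) ∧
  (∀ v : V, (∑ w : V, f v w) - (∑ u : V, f u v) =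
      if v = s then ((T 1).card : ℝ) - 1 else if v ∈ T 1 then -1 else 0) ∧
  (∀ v : V, ∑ u : V, x u v ≤ 1) ∧
  (∀ v w : V, G.Adj v w → v ≠ s → x v w ≤ ∑ u ∈ Finset.univ.erase w, x u v) ∧
  (∀ v w : V, G.Adj v w → v ≠ s → y v w ≤ ∑ u ∈ Finset.univ.erase w, y u v) ∧
  (∀ v ∈ T 1, v ≠ s → Lvl ℓ T v ≤ ∑ u : V, y u v)

/-- The ILP objective `Σ_{uv ∈ E} c(uv)·(y_{uv} + y_{vu})`, written as a sum over
ordered pairs (the cost function `c` is symmetric and `y` vanishes off arcs). -/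
def ILPobj {V : Type*} [Fintype V] (c : V → V → ℝ) (y : V → V → ℕ) : ℝ :=
  ∑ u : V, ∑ v : V, c u v * (y u v : ℝ)

/-- The undirected edge set on level `i` extracted from the ILP variables `y`:
edges `uv` of `G` with `y u v ≥ i` or `y v u ≥ i`. -/
def EdgeLvl {V : Type*} (G : SimpleGraph V) (y : V → V → ℕ) (i : ℕ) : Set (Sym2 V) :=
  {e | e ∈ G.edgeSet ∧ ∃ u v : V, e = s(u, v) ∧ i ≤ y u v}

/-!
An optimal solution contains no arc entering `s`: flow on such an arc can only circulate around
the directed cycle through `s` (the vertices not reachable from `s` have no entering arc, so no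
flow leaves them), and after cancelling that circulation the arc can be dropped at positive
saving. Nor does it contain any other directed cycle: the vertices reachable from it hold no
terminal and emit no flow, so all arcs leaving them can be dropped. Hence the active arcs
(`x = 1`) form an arborescence rooted at `s`. By the terminal-level and `y`-propagation
constraints every vertex of `T i` or of an edge of `E_i` other than `s` has its parent arc in
`E_i`, so `E_i` is connected through `s`, and it is acyclic as a subgraph of the arborescence.
-/

open Finset Relation

namespace Relation

variable {α : Type*}

theorem wellFounded_of_forall_not_transGen [Finite α] {r : α → α → Prop}
    (h : ∀ a, ¬ TransGen r a a) : WellFounded r :=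
  have : IsTrans α (TransGen r) := ⟨fun _ _ _ => TransGen.trans⟩
  have : Std.Irrefl (TransGen r) := ⟨h⟩
  Subrelation.wf TransGen.single (Finite.wellFounded_of_trans_of_irrefl _)

variable {r : α → α → Prop} {s v : α}

theorem exists_pred_mem_cycle (hs : TransGen r s s)
    (hv : ReflTransGen r s v ∧ ReflTransGen r v s) :
    ∃ u, (ReflTransGen r s u ∧ ReflTransGen r u s) ∧ r u v := by
  obtain ⟨hsv, hvs⟩ := hv
  rcases hsv.cases_tail with rfl | ⟨u, hsu, huv⟩
  · obtain ⟨u, hsu, hus⟩ := TransGen.tail'_iff.mp hs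
    exact ⟨u, ⟨hsu, .single hus⟩, hus⟩
  · exact ⟨u, ⟨hsu, hvs.head huv⟩, huv⟩

theorem exists_succ_mem_cycle (hs : TransGen r s s)
    (hv : ReflTransGen r s v ∧ ReflTransGen r v s) :
    ∃ w, (ReflTransGen r s w ∧ ReflTransGen r w s) ∧ r v w := by
  obtain ⟨hsv, hvs⟩ := hv
  rcases hvs.cases_head with rfl | ⟨w, hvw, hws⟩
  · obtain ⟨w, hsw, hws⟩ := TransGen.head'_iff.mp hs
    exact ⟨w, ⟨.single hsw, hws⟩, hsw⟩
  · exact ⟨w, ⟨hsv.tail hvw, hws⟩, hvw⟩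

end Relation

namespace Finset

variable {α : Type*} {Z : Finset α} {r : α → α → Prop} [DecidableRel r]

/-- Double counting the pairs related by `r`. -/
theorem card_filter_succ_eq_one (hin : ∀ v ∈ Z, #{u ∈ Z | r u v} = 1)
    (hout : ∀ u ∈ Z, ∃ v ∈ Z, r u v) : ∀ u ∈ Z, #{v ∈ Z | r u v} = 1 := by
  have hpos : ∀ u ∈ Z, 1 ≤ #{v ∈ Z | r u v} := fun u hu =>
    let ⟨v, hv, huv⟩ := hout u hu
    card_pos.2 ⟨v, mem_filter.2 ⟨hv, huv⟩⟩
  have hsum : ∑ _u ∈ Z, 1 = ∑ u ∈ Z, #{v ∈ Z | r u v} := by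
    rw [sum_congr rfl fun v hv => (hin v hv).symm]
    exact (sum_card_bipartiteAbove_eq_sum_card_bipartiteBelow r).symm
  exact fun u hu => ((sum_eq_sum_iff_of_le hpos).1 hsum u hu).symm

theorem sum_ite_cycle_out_eq_in [Fintype α] [DecidableEq α] {M : Type*} [AddCommMonoid M]
    (hin : ∀ v ∈ Z, #{u ∈ Z | r u v} = 1) (hout : ∀ u ∈ Z, #{v ∈ Z | r u v} = 1)
    (δ : M) (v : α) :
    ∑ w, (if v ∈ Z ∧ w ∈ Z ∧ r v w then δ else 0) =
      ∑ u, (if u ∈ Z ∧ v ∈ Z ∧ r u v then δ else 0) := by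
  by_cases hv : v ∈ Z
  · have hcard : ∀ (p : α → Prop) [DecidablePred p],
        #{a | a ∈ Z ∧ p a} = #{a ∈ Z | p a} := fun p _ => by congr 1; ext; simp
    simp only [hv, true_and, ← sum_filter, sum_const, hcard, hin v hv, hout v hv]
  · simp [hv]

theorem sum_netflow_eq_sum_compl [Fintype α] [DecidableEq α] {M : Type*} [AddCommGroup M]
    (f : α → α → M) (W : Finset α) :
    ∑ v ∈ W, (∑ w, f v w - ∑ u, f u v) =
      ∑ v ∈ W, ∑ w ∈ Wᶜ, f v w - ∑ v ∈ W, ∑ u ∈ Wᶜ, f u v := by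
  simp only [sum_sub_distrib, ← sum_add_sum_compl W, sum_add_distrib]
  rw [sum_comm (s := W) (t := W)]
  abel

end Finset

namespace SimpleGraph

/-- On a cycle, a vertex with no out-neighbour on the cycle (it exists by well-foundedness)
would have both of its cycle neighbours as in-neighbours. -/
theorem isAcyclic_of_adj_orientation {V : Type*} {H : SimpleGraph V} {r : V → V → Prop}
    (hadj : ∀ ⦃u v⦄, H.Adj u v → r u v ∨ r v u)
    (huniq : ∀ ⦃u u' v⦄, r u v → r u' v → u = u')
    (hwf : WellFounded (flip r)) : H.IsAcyclic := by
  classical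
  intro v c hc
  obtain ⟨m, hm, hmin⟩ := hwf.has_min {a | a ∈ c.support} ⟨v, c.start_mem_support⟩
  have hc' : (c.rotate m hm).IsCycle := hc.rotate hm
  have hpred : ∀ a ∈ (c.rotate m hm).support, H.Adj m a → r a m := fun a ha hma =>
    (hadj hma).resolve_left (hmin a ((c.mem_support_rotate_iff m hm).1 ha))
  exact hc'.snd_ne_penultimate <| huniq
    (hpred _ (Walk.getVert_mem_support _ _) (Walk.adj_snd hc'.not_nil))
    (hpred _ (Walk.getVert_mem_support _ _) (Walk.adj_penultimate hc'.not_nil).symm)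

end SimpleGraph

def restrictArcs {V M : Type*} [Zero M] (K : V → V → Prop) [DecidableRel K]
    (z : V → V → M) : V → V → M :=
  fun u v => if K u v then z u v else 0

theorem restrictArcs_le {V : Type*} (K : V → V → Prop) [DecidableRel K] (z : V → V → ℕ)
    (u v : V) : restrictArcs K z u v ≤ z u v := by
  unfold restrictArcs; split_ifs <;> omega

theorem le_Lvl {V : Type*} [DecidableEq V] {ℓ i : ℕ} {T : ℕ → Finset V} {v : V}
    (hi : i ∈ Icc 1 ℓ) (hv : v ∈ T i) : i ≤ Lvl ℓ T v :=
  le_sup (f := id) (mem_filter.2 ⟨hi, hv⟩)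

theorem edgeLvl_antitone {V : Type*} (G : SimpleGraph V) (y : V → V → ℕ) :
    Antitone (EdgeLvl G y) :=
  fun _ _ hij _ ⟨he, u, v, huv, hy⟩ => ⟨he, u, v, huv, hij.trans hy⟩

def ILPOptimal {V : Type*} [Fintype V] [DecidableEq V] (G : SimpleGraph V) (ℓ : ℕ)
    (T : ℕ → Finset V) (s : V) (c : V → V → ℝ) (y : V → V → ℕ) : Prop :=
  ∀ (x' y' : V → V → ℕ) (f' : V → V → ℝ),
    ILPFeasible G ℓ T s x' y' f' → ILPobj c y ≤ ILPobj c y'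

namespace ILPFeasible

variable {V : Type*} [Fintype V] [DecidableEq V] {G : SimpleGraph V} {ℓ : ℕ}
  {T : ℕ → Finset V} {s : V} {x y : V → V → ℕ} {f : V → V → ℝ} {i : ℕ}
  {u u' v w p q : V}

theorem x_le_one (h : ILPFeasible G ℓ T s x y f) (u v : V) : x u v ≤ 1 := h.2.2.2.1 u v

theorem x_eq_one_of_ne_zero (h : ILPFeasible G ℓ T s x y f) (hx : x u v ≠ 0) : x u v = 1 := by
  have := h.x_le_one u v; omega

theorem adj_of_x_eq_one (h : ILPFeasible G ℓ T s x y f) (hx : x u v = 1) : G.Adj u v := by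
  by_contra hn; have := h.1 u v hn; omega

theorem one_le_y (h : ILPFeasible G ℓ T s x y f) (hx : x u v = 1) : 1 ≤ y u v :=
  hx ▸ (h.2.2.2.2.1 u v).1

theorem y_eq_zero_of_x_ne_one (h : ILPFeasible G ℓ T s x y f) (hx : x u v ≠ 1) : y u v = 0 := by
  have h0 : x u v = 0 := by have := h.x_le_one u v; omega
  have := (h.2.2.2.2.1 u v).2
  rw [h0, mul_zero] at this
  omega

theorem x_eq_one_of_y_ne_zero (h : ILPFeasible G ℓ T s x y f) (hy : y u v ≠ 0) : x u v = 1 := by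
  by_contra hx; exact hy (h.y_eq_zero_of_x_ne_one hx)

theorem f_nonneg (h : ILPFeasible G ℓ T s x y f) (u v : V) : 0 ≤ f u v :=
  (h.2.2.2.2.2.1 u v).1

theorem f_eq_zero_of_x_ne_one (h : ILPFeasible G ℓ T s x y f) (hx : x u v ≠ 1) : f u v = 0 := by
  have h0 : x u v = 0 := by have := h.x_le_one u v; omega
  have := (h.2.2.2.2.2.1 u v).2
  rw [h0, Nat.cast_zero, mul_zero] at this
  exact le_antisymm this (h.f_nonneg u v)

theorem netflow_eq (h : ILPFeasible G ℓ T s x y f) (v : V) :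
    ∑ w, f v w - ∑ u, f u v =
      if v = s then ((T 1).card : ℝ) - 1 else if v ∈ T 1 then -1 else 0 :=
  h.2.2.2.2.2.2.1 v

theorem netflow_nonpos (h : ILPFeasible G ℓ T s x y f) (hv : v ≠ s) :
    ∑ w, f v w - ∑ u, f u v ≤ 0 := by
  rw [h.netflow_eq v, if_neg hv]; split_ifs <;> norm_num

theorem parent_unique (h : ILPFeasible G ℓ T s x y f) (hu : x u v = 1) (hu' : x u' v = 1) :
    u = u' := by
  by_contra hne
  have hle : x u v + x u' v ≤ ∑ a, x a v := by
    rw [← sum_pair (f := (x · v)) hne]; exact sum_le_sum_of_subset (subset_univ _)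
  have := h.2.2.2.2.2.2.2.1 v
  omega

theorem sum_in_eq_of_parent {M : Type*} [AddCommMonoid M] (h : ILPFeasible G ℓ T s x y f)
    {z : V → V → M} (hz : ∀ u, x u v ≠ 1 → z u v = 0) (hp : x p v = 1) :
    ∑ u, z u v = z p v :=
  sum_eq_single p (fun u _ hu => hz u fun hx => hu (h.parent_unique hx hp)) (by simp)

theorem y_le_sum_erase (h : ILPFeasible G ℓ T s x y f) (hvw : G.Adj v w) (hvs : v ≠ s) :
    y v w ≤ ∑ u ∈ univ.erase w, y u v :=
  h.2.2.2.2.2.2.2.2.2.1 v w hvw hvs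

theorem Lvl_le_sum_y (h : ILPFeasible G ℓ T s x y f) (hv : v ∈ T 1) (hvs : v ≠ s) :
    Lvl ℓ T v ≤ ∑ u, y u v :=
  h.2.2.2.2.2.2.2.2.2.2 v hv hvs

theorem flow_out_le_flow_in (h : ILPFeasible G ℓ T s x y f) (hv : v ≠ s) (hp : x p v = 1)
    (w : V) : f v w ≤ f p v := calc
  f v w ≤ ∑ w, f v w := single_le_sum (fun w _ => h.f_nonneg v w) (mem_univ w)
  _ ≤ ∑ u, f u v := by linarith [h.netflow_nonpos hv]
  _ = f p v := h.sum_in_eq_of_parent (fun _ => h.f_eq_zero_of_x_ne_one) hp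

/-- As no arc enters `W`, the net outflow of `W` is the (nonnegative) flow on arcs leaving it,
while conservation makes it `-|W ∩ T 1|`. -/
theorem no_terminal_and_no_outflow (h : ILPFeasible G ℓ T s x y f) {W : Finset V}
    (hsW : s ∉ W) (hW : ∀ u ∉ W, ∀ v ∈ W, x u v = 0) :
    (∀ v ∈ W, v ∉ T 1) ∧ ∀ v ∈ W, ∀ w ∉ W, f v w = 0 := by
  have hnet : ∑ v ∈ W, (∑ w, f v w - ∑ u, f u v) = ∑ v ∈ W, ∑ w ∈ Wᶜ, f v w := by
    rw [sum_netflow_eq_sum_compl, sub_eq_self]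
    refine sum_eq_zero fun v hv => sum_eq_zero fun u hu => h.f_eq_zero_of_x_ne_one ?_
    rw [hW u (mem_compl.1 hu) v hv]; omega
  have hnonpos : ∀ v ∈ W, ∑ w, f v w - ∑ u, f u v ≤ 0 :=
    fun v hv => h.netflow_nonpos (ne_of_mem_of_not_mem hv hsW)
  have hnonneg : ∀ v ∈ W, 0 ≤ ∑ w ∈ Wᶜ, f v w := fun v _ =>
    sum_nonneg fun w _ => h.f_nonneg v w
  have hzero : ∑ v ∈ W, ∑ w ∈ Wᶜ, f v w = 0 :=
    le_antisymm (hnet ▸ sum_nonpos hnonpos) (sum_nonneg hnonneg)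
  refine ⟨fun v hv hvT => ?_, fun v hv w hw => ?_⟩
  · have := (sum_eq_zero_iff_of_nonpos hnonpos).1 (hnet.trans hzero) v hv
    rw [h.netflow_eq v, if_neg (ne_of_mem_of_not_mem hv hsW), if_pos hvT] at this
    norm_num at this
  · exact (sum_eq_zero_iff_of_nonneg fun w _ => h.f_nonneg v w).1
      ((sum_eq_zero_iff_of_nonneg hnonneg).1 hzero v hv) w (mem_compl.2 hw)

theorem restrict (h : ILPFeasible G ℓ T s x y f) (K : V → V → Prop) [DecidableRel K]
    (hnet : ∀ v, ∑ w, restrictArcs K f v w - ∑ u, restrictArcs K f u v =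
      ∑ w, f v w - ∑ u, f u v)
    (hprop : ∀ u v w, v ≠ s → x u v = 1 → x v w = 1 → K v w → K u v)
    (hterm : ∀ u v, v ∈ T 1 → v ≠ s → x u v = 1 → K u v) :
    ILPFeasible G ℓ T s (restrictArcs K x) (restrictArcs K y) (restrictArcs K f) := by
  have sum_in_eq : ∀ {z : V → V → ℕ} {v}, (∀ u, x u v = 1 → K u v) →
      (∀ u, x u v ≠ 1 → z u v = 0) → ∀ S : Finset V,
      ∑ u ∈ S, restrictArcs K z u v = ∑ u ∈ S, z u v := fun hK hz _ =>
    sum_congr rfl fun u _ => by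
      unfold restrictArcs
      split_ifs with hKu
      · rfl
      · exact (hz u fun hx => hKu (hK u hx)).symm
  have hxz : ∀ u v, x u v ≠ 1 → x u v = 0 := fun u v hx => by have := h.x_le_one u v; omega
  have hyz : ∀ u v, x u v ≠ 1 → y u v = 0 := fun u v => h.y_eq_zero_of_x_ne_one
  obtain ⟨hx0, hy0, hf0, hx1, hxy, hcap, hcons, hdeg, hxprop, hyprop, hlvl⟩ := h
  refine ⟨fun u v huv => ?_, fun u v huv => ?_, fun u v huv => ?_, fun u v => ?_, fun u v => ?_,
    fun u v => ?_, fun v => (hnet v).trans (hcons v), fun v => ?_,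
    fun v w hvw hvs => ?_, fun v w hvw hvs => ?_, fun v hv hvs => ?_⟩
  · by_cases hK : K u v <;> simp [restrictArcs, hK, hx0 u v huv]
  · by_cases hK : K u v <;> simp [restrictArcs, hK, hy0 u v huv]
  · by_cases hK : K u v <;> simp [restrictArcs, hK, hf0 u v huv]
  · by_cases hK : K u v <;> simp [restrictArcs, hK, hx1 u v]
  · by_cases hK : K u v <;> simp [restrictArcs, hK, hxy u v]
  · by_cases hK : K u v <;> simp [restrictArcs, hK, hcap u v]
  · exact (sum_le_sum fun u _ => restrictArcs_le K x u v).trans (hdeg v)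
  · by_cases hx : x v w = 1
    · by_cases hK : K v w
      · rw [sum_in_eq (fun u hu => hprop u v w hvs hu hx hK) (hxz · v)]
        simpa [restrictArcs, hK] using hxprop v w hvw hvs
      · simp [restrictArcs, hK]
    · simp [restrictArcs, hxz v w hx]
  · by_cases hx : x v w = 1
    · by_cases hK : K v w
      · rw [sum_in_eq (fun u hu => hprop u v w hvs hu hx hK) (hyz · v)]
        simpa [restrictArcs, hK] using hyprop v w hvw hvs
      · simp [restrictArcs, hK]
    · simp [restrictArcs, hyz v w hx]
  · rw [sum_in_eq (fun u hu => hterm u v hv hvs hu) (hyz · v)]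
    exact hlvl v hv hvs

theorem ILPobj_restrictArcs_lt (h : ILPFeasible G ℓ T s x y f) {c : V → V → ℝ}
    (hc : ∀ u v, G.Adj u v → 0 < c u v) {K : V → V → Prop} [DecidableRel K]
    (hpq : x p q = 1) (hK : ¬ K p q) : ILPobj c (restrictArcs K y) < ILPobj c y := by
  have hle : ∀ u v, c u v * ((restrictArcs K y u v : ℕ) : ℝ) ≤ c u v * y u v := by
    intro u v
    by_cases hy : y u v = 0
    · simp [restrictArcs, hy]
    · refine mul_le_mul_of_nonneg_left (by exact_mod_cast restrictArcs_le K y u v) ?_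
      exact (hc u v (h.adj_of_x_eq_one (h.x_eq_one_of_y_ne_zero hy))).le
  have hlt : c p q * ((restrictArcs K y p q : ℕ) : ℝ) < c p q * y p q := by
    simp only [restrictArcs, if_neg hK, Nat.cast_zero, mul_zero]
    exact mul_pos (hc p q (h.adj_of_x_eq_one hpq)) (by exact_mod_cast h.one_le_y hpq)
  exact sum_lt_sum (fun u _ => sum_le_sum fun v _ => hle u v)
    ⟨p, mem_univ p, sum_lt_sum (fun v _ => hle p v) ⟨q, mem_univ q, hlt⟩⟩

/-- `hin` and `hout` make `Z` a union of directed cycles of active arcs (in-degrees are at most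
one), so `δ` units of flow can be cancelled around them. -/
theorem sub_cycle (h : ILPFeasible G ℓ T s x y f) (Z : Finset V)
    (hin : ∀ v ∈ Z, ∃ u ∈ Z, x u v = 1) (hout : ∀ u ∈ Z, ∃ v ∈ Z, x u v = 1)
    {δ : ℝ} (hδ : 0 ≤ δ) (hle : ∀ u ∈ Z, ∀ v ∈ Z, x u v = 1 → δ ≤ f u v) :
    ILPFeasible G ℓ T s x y
      (fun u v => f u v - if u ∈ Z ∧ v ∈ Z ∧ x u v = 1 then δ else 0) := by
  have hcard_in : ∀ v ∈ Z, #{u ∈ Z | x u v = 1} = 1 := fun v hv => by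
    obtain ⟨u, hu, huv⟩ := hin v hv
    exact card_eq_one.2 ⟨u, eq_singleton_iff_unique_mem.2
      ⟨mem_filter.2 ⟨hu, huv⟩, fun u' hu' => h.parent_unique (mem_filter.1 hu').2 huv⟩⟩
  have hcard_out := card_filter_succ_eq_one hcard_in hout
  obtain ⟨hx0, hy0, hf0, hx1, hxy, hcap, hcons, hdeg, hxprop, hyprop, hlvl⟩ := h
  refine ⟨hx0, hy0, fun u v huv => ?_, hx1, hxy, fun u v => ?_, fun v => ?_, hdeg, hxprop,
    hyprop, hlvl⟩
  · simp [hf0 u v huv, hx0 u v huv]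
  · dsimp only
    split_ifs with huv
    · exact ⟨by linarith [hle u huv.1 v huv.2.1 huv.2.2], by linarith [(hcap u v).2]⟩
    · simpa using hcap u v
  · rw [sum_sub_distrib, sum_sub_distrib, sum_ite_cycle_out_eq_in hcard_in hcard_out,
      ← hcons v]
    ring

theorem f_le_of_reflTransGen (h : ILPFeasible G ℓ T s x y f) (hp : x p s = 1)
    (hv : ReflTransGen (fun a b => x a b = 1) v s) (hu : x u v = 1) : f p s ≤ f u v := by
  induction hv using ReflTransGen.head_induction_on generalizing u with
  | refl => rw [h.parent_unique hu hp]
  | @head v w hvw _ ih =>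
    rcases eq_or_ne v s with rfl | hvs
    · rw [h.parent_unique hu hp]
    · exact (ih hvw).trans (h.flow_out_le_flow_in hvs hu w)

/-- No arc enters the set of vertices not reachable from `s`, so no flow leaves it; hence
positive flow on `(p, s)` circulates around a directed cycle through `s` and can be cancelled
there. -/
theorem exists_flow_eq_zero_of_arc_into_source (h : ILPFeasible G ℓ T s x y f)
    (hp : x p s = 1) : ∃ f' : V → V → ℝ, ILPFeasible G ℓ T s x y f' ∧ f' p s = 0 := by
  classical
  rcases eq_or_ne (f p s) 0 with hf | hf
  · exact ⟨f, h, hf⟩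
  set r : V → V → Prop := fun a b => x a b = 1
  have hsp : ReflTransGen r s p := by
    by_contra hsp
    refine hf ((h.no_terminal_and_no_outflow (W := {v | ¬ ReflTransGen r s v})
        (by simp [ReflTransGen.refl]) fun u hu v hv => ?_).2 p (by simpa) s
      (by simp [ReflTransGen.refl]))
    simp only [mem_filter, mem_univ, true_and, not_not] at hu hv
    by_contra huv
    exact hv (hu.tail (h.x_eq_one_of_ne_zero huv))
  have hcyc : TransGen r s s := TransGen.tail'_iff.2 ⟨p, hsp, hp⟩
  refine ⟨_, h.sub_cycle {v | ReflTransGen r s v ∧ ReflTransGen r v s} (fun v hv => ?_)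
    (fun u hu => ?_) (h.f_nonneg p s) (fun u _ v hv huv => ?_), ?_⟩
  · obtain ⟨u, hu, huv⟩ := exists_pred_mem_cycle hcyc (by simpa using hv)
    exact ⟨u, by simpa using hu, huv⟩
  · obtain ⟨v, hv, huv⟩ := exists_succ_mem_cycle hcyc (by simpa using hu)
    exact ⟨v, by simpa using hv, huv⟩
  · exact h.f_le_of_reflTransGen hp (mem_filter.1 hv).2.2 huv
  · have hps : ReflTransGen r p s := .single hp
    simp [hsp, hps, hp, ReflTransGen.refl]

theorem netflow_restrict_of_no_arc_in (h : ILPFeasible G ℓ T s x y f) {D : Finset V}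
    (hsD : s ∉ D) (hD : ∀ u ∉ D, ∀ v ∈ D, x u v = 0) (v : V) :
    ∑ w, restrictArcs (fun a _ => a ∉ D) f v w -
      ∑ u, restrictArcs (fun a _ => a ∉ D) f u v =
      ∑ w, f v w - ∑ u, f u v := by
  obtain ⟨hT, hout⟩ := h.no_terminal_and_no_outflow hsD hD
  have hin : ∀ u ∉ D, ∀ v ∈ D, f u v = 0 := fun u hu v hv =>
    h.f_eq_zero_of_x_ne_one (by rw [hD u hu v hv]; omega)
  by_cases hv : v ∈ D
  · rw [h.netflow_eq v, if_neg (ne_of_mem_of_not_mem hv hsD), if_neg (hT v hv)]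
    simp only [restrictArcs, hv, not_true_eq_false, if_false, sum_const_zero, zero_sub,
      neg_eq_zero]
    exact sum_eq_zero fun u _ => by split_ifs with hu; exacts [rfl, hin u hu v hv]
  · simp only [restrictArcs, hv, not_false_eq_true, if_true]
    congr 1
    exact sum_congr rfl fun u _ => by split_ifs with hu; exacts [(hout u hu v hv).symm, rfl]

theorem x_eq_one_of_adj_edgeLvl (h : ILPFeasible G ℓ T s x y f) (hi : 1 ≤ i)
    (huv : (SimpleGraph.fromEdgeSet (EdgeLvl G y i)).Adj u v) : x u v = 1 ∨ x v u = 1 := by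
  obtain ⟨⟨-, a, b, hab, hy⟩, -⟩ := (SimpleGraph.fromEdgeSet_adj _).1 huv
  have hx : x a b = 1 := h.x_eq_one_of_y_ne_zero (by omega)
  rcases Sym2.eq_iff.1 hab with ⟨rfl, rfl⟩ | ⟨rfl, rfl⟩
  exacts [.inl hx, .inr hx]

theorem adj_edgeLvl (h : ILPFeasible G ℓ T s x y f) (hp : x p v = 1) (hy : i ≤ y p v) :
    (SimpleGraph.fromEdgeSet (EdgeLvl G y i)).Adj p v :=
  have hadj := h.adj_of_x_eq_one hp
  (SimpleGraph.fromEdgeSet_adj _).2 ⟨⟨G.mem_edgeSet.2 hadj, p, v, rfl, hy⟩, hadj.ne⟩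

theorem le_sum_y_of_mem (h : ILPFeasible G ℓ T s x y f) (hi : i ∈ Icc 1 ℓ) (hTi : T i ⊆ T 1)
    (hvs : v ≠ s) (hv : v ∈ (T i : Set V) ∪ edgeSupport (EdgeLvl G y i)) :
    i ≤ ∑ u, y u v := by
  have hi1 := (mem_Icc.1 hi).1
  rcases hv with hv | ⟨e, ⟨-, a, b, rfl, hab⟩, hve⟩
  · exact (le_Lvl hi hv).trans (h.Lvl_le_sum_y (hTi hv) hvs)
  rcases Sym2.mem_iff.1 hve with rfl | rfl
  · have hvb := h.adj_of_x_eq_one (h.x_eq_one_of_y_ne_zero (by omega : y v b ≠ 0))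
    calc i ≤ y v b := hab
      _ ≤ ∑ u ∈ univ.erase b, y u v := h.y_le_sum_erase hvb hvs
      _ ≤ ∑ u, y u v := sum_le_sum_of_subset (subset_univ _)
  · exact hab.trans (single_le_sum (f := (y · v)) (fun _ _ => Nat.zero_le _) (mem_univ a))

theorem exists_parent_of_le_sum_y (h : ILPFeasible G ℓ T s x y f) (hi : 1 ≤ i)
    (hv : i ≤ ∑ u, y u v) : ∃ p, x p v = 1 ∧ i ≤ y p v := by
  obtain ⟨p, -, hp⟩ := exists_ne_zero_of_sum_ne_zero (by omega : ∑ u, y u v ≠ 0)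
  have hxp := h.x_eq_one_of_y_ne_zero hp
  exact ⟨p, hxp, h.sum_in_eq_of_parent (fun _ => h.y_eq_zero_of_x_ne_one) hxp ▸ hv⟩

theorem reachable_source (h : ILPFeasible G ℓ T s x y f)
    (hwf : WellFounded (fun a b => x a b = 1)) (hi : i ∈ Icc 1 ℓ) (hTi : T i ⊆ T 1) :
    ∀ v ∈ (T i : Set V) ∪ edgeSupport (EdgeLvl G y i),
      (SimpleGraph.fromEdgeSet (EdgeLvl G y i)).Reachable v s := by
  intro v
  induction v using hwf.induction with
  | _ v ih =>
  intro hv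
  rcases eq_or_ne v s with rfl | hvs
  · rfl
  obtain ⟨p, hp, hyp⟩ :=
    h.exists_parent_of_le_sum_y (mem_Icc.1 hi).1 (h.le_sum_y_of_mem hi hTi hvs hv)
  have hadj := h.adj_edgeLvl hp hyp
  exact hadj.reachable.symm.trans
    (ih p hp (.inr ⟨s(p, v), ((SimpleGraph.fromEdgeSet_adj _).1 hadj).1, Sym2.mem_mk_left p v⟩))

theorem isAcyclic_edgeLvl (h : ILPFeasible G ℓ T s x y f)
    (hacyc : ∀ v, ¬ TransGen (fun a b => x a b = 1) v v) (hi : 1 ≤ i) :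
    (SimpleGraph.fromEdgeSet (EdgeLvl G y i)).IsAcyclic :=
  SimpleGraph.isAcyclic_of_adj_orientation (fun _ _ huv => h.x_eq_one_of_adj_edgeLvl hi huv)
    (fun _ _ _ => h.parent_unique)
    (wellFounded_of_forall_not_transGen fun v hv => hacyc v (transGen_swap.1 hv))

end ILPFeasible

namespace ILPOptimal

variable {V : Type*} [Fintype V] [DecidableEq V] {G : SimpleGraph V} {ℓ : ℕ}
  {T : ℕ → Finset V} {s : V} {c : V → V → ℝ} {x y : V → V → ℕ} {f : V → V → ℝ}

theorem keep_active_arc (hopt : ILPOptimal G ℓ T s c y) (h : ILPFeasible G ℓ T s x y f)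
    (hc : ∀ u v, G.Adj u v → 0 < c u v) (K : V → V → Prop) [DecidableRel K]
    (hnet : ∀ v, ∑ w, restrictArcs K f v w - ∑ u, restrictArcs K f u v =
      ∑ w, f v w - ∑ u, f u v)
    (hprop : ∀ u v w, v ≠ s → x u v = 1 → x v w = 1 → K v w → K u v)
    (hterm : ∀ u v, v ∈ T 1 → v ≠ s → x u v = 1 → K u v) {p q : V} (hpq : x p q = 1) :
    K p q := by
  by_contra hK
  exact (hopt _ _ _ (h.restrict K hnet hprop hterm)).not_gt (h.ILPobj_restrictArcs_lt hc hpq hK)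

theorem x_into_source_ne_one (hopt : ILPOptimal G ℓ T s c y) (h : ILPFeasible G ℓ T s x y f)
    (hc : ∀ u v, G.Adj u v → 0 < c u v) (p : V) : x p s ≠ 1 := by
  classical
  intro hp
  obtain ⟨f', h', hf'⟩ := h.exists_flow_eq_zero_of_arc_into_source hp
  have hres : restrictArcs (fun u v => ¬ (u = p ∧ v = s)) f' = f' := by
    funext u v
    unfold restrictArcs
    split_ifs with hK
    · rfl
    · obtain ⟨rfl, rfl⟩ := not_not.1 hK
      exact hf'.symm
  exact hopt.keep_active_arc h' hc (fun u v => ¬ (u = p ∧ v = s)) (fun _ => by rw [hres])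
    (fun _ _ _ hvs _ _ _ hK => hvs hK.2)
    (fun _ _ _ hvs _ hK => hvs hK.2) hp ⟨rfl, rfl⟩

/-- The vertices reachable from a directed cycle hold no terminal and emit no flow (`s` is not
among them, having no parent), so all arcs leaving them can be dropped. -/
theorem not_transGen_self (hopt : ILPOptimal G ℓ T s c y) (h : ILPFeasible G ℓ T s x y f)
    (hc : ∀ u v, G.Adj u v → 0 < c u v) (v₀ : V) :
    ¬ TransGen (fun a b => x a b = 1) v₀ v₀ := by
  classical
  intro hcyc
  set D : Finset V := {v | ReflTransGen (fun a b => x a b = 1) v₀ v}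
  have hclosed : ∀ u v, u ∈ D → x u v = 1 → v ∈ D := fun u v hu huv => by
    simpa [D] using (mem_filter.1 hu).2.tail huv
  have hpar : ∀ v ∈ D, ∃ u ∈ D, x u v = 1 := fun v hv => by
    rcases (mem_filter.1 hv).2.cases_tail with rfl | ⟨u, hu, huv⟩
    · obtain ⟨u, hu, huv⟩ := TransGen.tail'_iff.1 hcyc
      exact ⟨u, by simpa [D] using hu, huv⟩
    · exact ⟨u, by simpa [D] using hu, huv⟩
  have hD : ∀ u ∉ D, ∀ v ∈ D, x u v = 0 := fun u hu v hv => by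
    obtain ⟨u', hu', huv'⟩ := hpar v hv
    by_contra huv
    exact hu (h.parent_unique (h.x_eq_one_of_ne_zero huv) huv' ▸ hu')
  have hsD : s ∉ D := fun hs =>
    let ⟨u, _, hu⟩ := hpar s hs
    hopt.x_into_source_ne_one h hc u hu
  obtain ⟨u₀, hu₀, hx₀⟩ := hpar v₀ (by simp [D, ReflTransGen.refl])
  exact hopt.keep_active_arc h hc (fun a _ => a ∉ D) (h.netflow_restrict_of_no_arc_in hsD hD)
    (fun u v _ _ huv _ hv hu => hv (hclosed u v hu huv))
    (fun u v hv _ huv hu => (h.no_terminal_and_no_outflow hsD hD).1 v (hclosed u v hu huv) hv)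
    hx₀ hu₀

end ILPOptimal

theorem stmt_18_general {V : Type} [Fintype V] [DecidableEq V] (G : SimpleGraph V)
    (c : V → V → ℝ)
    (hcpos : ∀ u v : V, G.Adj u v → 0 < c u v)
    (ℓ : ℕ) (T : ℕ → Finset V)
    (hnest : ∀ i ∈ Finset.Icc 1 ℓ, ∀ j ∈ Finset.Icc 1 ℓ, i ≤ j → T j ⊆ T i)
    (s : V)
    (x y : V → V → ℕ) (f : V → V → ℝ)
    (hfeas : ILPFeasible G ℓ T s x y f)
    (hopt : ∀ (x' y' : V → V → ℕ) (f' : V → V → ℝ),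
      ILPFeasible G ℓ T s x' y' f' → ILPobj c y ≤ ILPobj c y') :
    (∀ i ∈ Finset.Icc 1 ℓ,
      (SimpleGraph.fromEdgeSet (EdgeLvl G y i)).IsAcyclic ∧
      SpansConn (EdgeLvl G y i) (↑(T i) : Set V)) ∧
    (∀ i ∈ Finset.Icc 1 ℓ, ∀ j ∈ Finset.Icc 1 ℓ, i ≤ j → EdgeLvl G y j ⊆ EdgeLvl G y i) := by
  have hacyc := ILPOptimal.not_transGen_self hopt hfeas hcpos
  have hwf := wellFounded_of_forall_not_transGen hacyc
  refine ⟨fun i hi => ?_, fun i _ j _ hij => edgeLvl_antitone G y hij⟩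
  obtain ⟨hi1, hiℓ⟩ := mem_Icc.1 hi
  have hTi : T i ⊆ T 1 := hnest 1 (mem_Icc.2 ⟨le_rfl, hi1.trans hiℓ⟩) i hi hi1
  refine ⟨hfeas.isAcyclic_edgeLvl hacyc hi1, fun u hu v hv => ?_⟩
  exact (hfeas.reachable_source hwf hi hTi u hu).trans (hfeas.reachable_source hwf hi hTi v hv).symm

/-- In every optimal solution of the flow-based ILP, for each level `i` the edge set
`E_i = {uv ∈ E : y_{uv} ≥ i or y_{vu} ≥ i}` forms a connected acyclic subgraph of `G`
containing all terminals of `T i` (a Steiner tree for `T i`), and the edge sets are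
nested: `E_ℓ ⊆ … ⊆ E_1`. -/
theorem stmt_18 {V : Type} [Fintype V] [DecidableEq V] (G : SimpleGraph V)
    (hconn : G.Connected)
    (c : V → V → ℝ) (hcsymm : ∀ u v : V, c u v = c v u)
    (hcpos : ∀ u v : V, G.Adj u v → 0 < c u v)
    (ℓ : ℕ) (hℓ : 1 ≤ ℓ) (T : ℕ → Finset V)
    (hTne : ∀ i ∈ Finset.Icc 1 ℓ, (T i).Nonempty)
    (hnest : ∀ i ∈ Finset.Icc 1 ℓ, ∀ j ∈ Finset.Icc 1 ℓ, i ≤ j → T j ⊆ T i)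
    (s : V) (hs : s ∈ T ℓ)
    (x y : V → V → ℕ) (f : V → V → ℝ)
    (hfeas : ILPFeasible G ℓ T s x y f)
    (hopt : ∀ (x' y' : V → V → ℕ) (f' : V → V → ℝ),
      ILPFeasible G ℓ T s x' y' f' → ILPobj c y ≤ ILPobj c y') :
    (∀ i ∈ Finset.Icc 1 ℓ,
      (SimpleGraph.fromEdgeSet (EdgeLvl G y i)).IsAcyclic ∧
      SpansConn (EdgeLvl G y i) (↑(T i) : Set V)) ∧
    (∀ i ∈ Finset.Icc 1 ℓ, ∀ j ∈ Finset.Icc 1 ℓ, i ≤ j → EdgeLvl G y j ⊆ EdgeLvl G y i) :=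
  stmt_18_general G c hcpos ℓ T hnest s x y f hfeas hopt
end
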